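/- arXiv:math/0106264 — 11 statements merged into one kernel-verified Lean document; each statement's English description precedes it below -/
import Mathlib

section
/- Let Γ be a group, Γ₀ a subgroup, and let σ, τ ∈ Γ satisfy σ⁻¹Γ₀σ ⊆ Γ₀ and τ⁻¹Γ₀τ ⊆ Γ₀ (so that Γ₀ ⊆ σΓ₀σ⁻¹ and Γ₀ ⊆ τΓ₀τ⁻¹). Then the number of right cosets Γ₀x contained in the set Γ₀τΓ₀τ⁻¹σ ∩ Γ₀σΓ₀ = τΓ₀τ⁻¹σ ∩ σΓ₀ equals the index of Γ₀ in the subgroup τΓ₀τ⁻¹ ∩ σΓ₀σ⁻¹. -/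
open scoped Pointwise


lemma aux_card {Γ : Type*} [Group Γ] (Γ₀ K : Subgroup Γ) (σ : Γ) :
    Nat.card (Quotient.mk (QuotientGroup.rightRel Γ₀) '' ((K : Set Γ) * {σ}))
      = Γ₀.relIndex K := by
  rw [Subgroup.relIndex, Subgroup.index,
    ← Nat.card_congr (QuotientGroup.quotientRightRelEquivQuotientLeftRel (Γ₀.subgroupOf K))]
  apply Nat.card_congr
  symm
  refine Equiv.ofBijective (Quotient.lift (fun k : K =>
    (⟨Quotient.mk (QuotientGroup.rightRel Γ₀) ((k : Γ) * σ),
      ⟨(k : Γ) * σ, ⟨(k : Γ), k.2, σ, rfl, rfl⟩, rfl⟩⟩ :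
      (Quotient.mk (QuotientGroup.rightRel Γ₀) '' ((K : Set Γ) * {σ})))) ?_) ⟨?_, ?_⟩
  · intro k k' h
    have h' : k' * k⁻¹ ∈ Γ₀.subgroupOf K := QuotientGroup.rightRel_apply.mp h
    have h'' := Subgroup.mem_subgroupOf.mp h'
    ext
    apply Quotient.sound
    refine QuotientGroup.rightRel_apply.mpr ?_
    simpa [mul_assoc] using h''
  · intro q q'
    induction q using Quotient.ind
    induction q' using Quotient.ind
    rename_i k k'
    intro h
    have h2 : Quotient.mk (QuotientGroup.rightRel Γ₀) ((k : Γ) * σ)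
        = Quotient.mk (QuotientGroup.rightRel Γ₀) ((k' : Γ) * σ) := congrArg Subtype.val h
    have h3 := QuotientGroup.rightRel_apply.mp (Quotient.exact h2)
    apply Quotient.sound
    refine QuotientGroup.rightRel_apply.mpr (Subgroup.mem_subgroupOf.mpr ?_)
    simpa [mul_assoc] using h3
  · rintro ⟨q, x, ⟨a, ha, b, rfl, rfl⟩, rfl⟩
    exact ⟨Quotient.mk _ (⟨a, ha⟩ : K), rfl⟩


/-- if `σ⁻¹Γ₀σ ⊆ Γ₀` and `τ⁻¹Γ₀τ ⊆ Γ₀`, then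
`Γ₀τΓ₀τ⁻¹σ ∩ Γ₀σΓ₀ = τΓ₀τ⁻¹σ ∩ σΓ₀`, and the number of right cosets `Γ₀x` contained in this
set equals the index of `Γ₀` in the subgroup `τΓ₀τ⁻¹ ∩ σΓ₀σ⁻¹`. -/
theorem hecke_intersection_right_coset_count
    {Γ : Type*} [Group Γ] (Γ₀ : Subgroup Γ) (σ τ : Γ)
    (hσ : ∀ x ∈ Γ₀, σ⁻¹ * x * σ ∈ Γ₀) (hτ : ∀ x ∈ Γ₀, τ⁻¹ * x * τ ∈ Γ₀) :
    (Γ₀ : Set Γ) * {τ} * (Γ₀ : Set Γ) * {τ⁻¹ * σ} ∩ DoubleCoset.doubleCoset σ (Γ₀ : Set Γ) (Γ₀ : Set Γ)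
        = ((MulAut.conj τ • Γ₀ : Subgroup Γ) : Set Γ) * {σ} ∩ σ • (Γ₀ : Set Γ) ∧
    Nat.card
        (Quotient.mk (QuotientGroup.rightRel Γ₀) ''
          (((MulAut.conj τ • Γ₀ : Subgroup Γ) : Set Γ) * {σ} ∩ σ • (Γ₀ : Set Γ)))
      = Γ₀.relIndex (MulAut.conj τ • Γ₀ ⊓ MulAut.conj σ • Γ₀) := by
  have key : ∀ (ρ x : Γ), x ∈ MulAut.conj ρ • Γ₀ ↔ ρ⁻¹ * x * ρ ∈ Γ₀ := by
    intro ρ x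
    rw [Subgroup.mem_pointwise_smul_iff_inv_smul_mem]
    simp [MulAut.conj_apply, mul_assoc]
  have hA : (Γ₀ : Set Γ) * {τ} * (Γ₀ : Set Γ) * {τ⁻¹ * σ}
      = ((MulAut.conj τ • Γ₀ : Subgroup Γ) : Set Γ) * {σ} := by
    ext x
    simp only [Set.mem_mul, Set.mem_singleton_iff, SetLike.mem_coe, exists_eq_left]
    constructor
    · rintro ⟨p, ⟨q, ⟨a, ha, rfl⟩, b, hb, rfl⟩, rfl⟩
      refine ⟨a * τ * b * τ⁻¹, (key τ _).mpr ?_, by group⟩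
      have h1 : τ⁻¹ * (a * τ * b * τ⁻¹) * τ = (τ⁻¹ * a * τ) * b := by group
      rw [h1]
      exact Γ₀.mul_mem (hτ a ha) hb
    · rintro ⟨y, hy, rfl⟩
      have hg := (key τ y).mp hy
      exact ⟨τ * (τ⁻¹ * y * τ), ⟨τ, ⟨1, Γ₀.one_mem, one_mul τ⟩, τ⁻¹ * y * τ, hg, rfl⟩, by group⟩
  have hC : σ • (Γ₀ : Set Γ) = ((MulAut.conj σ • Γ₀ : Subgroup Γ) : Set Γ) * {σ} := by
    ext x
    rw [Set.mem_smul_set_iff_inv_smul_mem, smul_eq_mul]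
    simp only [Set.mem_mul, Set.mem_singleton_iff, SetLike.mem_coe, exists_eq_left]
    constructor
    · intro hx
      refine ⟨x * σ⁻¹, (key σ _).mpr ?_, by group⟩
      have h1 : σ⁻¹ * (x * σ⁻¹) * σ = σ⁻¹ * x * (σ⁻¹ * σ) := by group
      rw [h1]; simpa using hx
    · rintro ⟨y, hy, rfl⟩
      have hg := (key σ y).mp hy
      have h1 : σ⁻¹ * (y * σ) = σ⁻¹ * y * σ := by group
      rw [h1]; exact hg
  have hB : DoubleCoset.doubleCoset σ (Γ₀ : Set Γ) (Γ₀ : Set Γ) = σ • (Γ₀ : Set Γ) := by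
    ext x
    rw [DoubleCoset.mem_doubleCoset, Set.mem_smul_set_iff_inv_smul_mem, smul_eq_mul]
    constructor
    · rintro ⟨a, ha, b, hb, rfl⟩
      have h1 : σ⁻¹ * (a * σ * b) = (σ⁻¹ * a * σ) * b := by group
      rw [h1]
      exact Γ₀.mul_mem (hσ a ha) hb
    · intro hx
      exact ⟨1, Γ₀.one_mem, σ⁻¹ * x, hx, by group⟩
  have hD : ((MulAut.conj τ • Γ₀ : Subgroup Γ) : Set Γ) * {σ} ∩
        (((MulAut.conj σ • Γ₀ : Subgroup Γ) : Set Γ) * {σ})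
      = ((MulAut.conj τ • Γ₀ ⊓ MulAut.conj σ • Γ₀ : Subgroup Γ) : Set Γ) * {σ} := by
    ext x
    simp only [Set.mem_inter_iff, Set.mem_mul, Set.mem_singleton_iff, SetLike.mem_coe,
      Subgroup.mem_inf, exists_eq_left]
    constructor
    · rintro ⟨⟨y, hy, rfl⟩, z, hz, hzx⟩
      have h1 : z = y := mul_right_cancel hzx
      subst h1
      exact ⟨z, ⟨hy, hz⟩, rfl⟩
    · rintro ⟨y, ⟨hy1, hy2⟩, rfl⟩
      exact ⟨⟨y, hy1, rfl⟩, y, hy2, rfl⟩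
  refine ⟨by rw [hA, hB], ?_⟩
  rw [hC, hD, aux_card]
end

section
/- Let Γ be a group, Γ₀ a subgroup, and let γ, σ, τ ∈ Γ each satisfy x⁻¹Γ₀x ⊆ Γ₀ (for x = γ, σ, τ). Then the relative index satisfies [γτΓ₀τ⁻¹γ⁻¹ ∩ γσΓ₀σ⁻¹γ⁻¹ : Γ₀] = [γΓ₀γ⁻¹ : Γ₀] · [τΓ₀τ⁻¹ ∩ σΓ₀σ⁻¹ : Γ₀], where [H : Γ₀] denotes the index of Γ₀ in a subgroup H containing Γ₀. -/
open scoped Pointwise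

lemma smul_eq_map_aux {Γ : Type*} [Group Γ] (g : MulAut Γ) (H : Subgroup Γ) :
    g • H = H.map g.toMonoidHom := rfl

/-- if `γ, σ, τ` each satisfy `x⁻¹Γ₀x ⊆ Γ₀`, then
`[γτΓ₀τ⁻¹γ⁻¹ ∩ γσΓ₀σ⁻¹γ⁻¹ : Γ₀] = [γΓ₀γ⁻¹ : Γ₀] · [τΓ₀τ⁻¹ ∩ σΓ₀σ⁻¹ : Γ₀]`,
where `[H : Γ₀]` is the index of `Γ₀` in a subgroup `H ⊇ Γ₀` (formalized as `Γ₀.relindex H`).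
Here `g • Γ₀` for `g = MulAut.conj x` is the conjugate subgroup `xΓ₀x⁻¹`. -/
theorem hecke_relindex_multiplicative
    {Γ : Type*} [Group Γ] (Γ₀ : Subgroup Γ) (γ σ τ : Γ)
    (hγ : ∀ x ∈ Γ₀, γ⁻¹ * x * γ ∈ Γ₀)
    (hσ : ∀ x ∈ Γ₀, σ⁻¹ * x * σ ∈ Γ₀)
    (hτ : ∀ x ∈ Γ₀, τ⁻¹ * x * τ ∈ Γ₀) :
    Γ₀.relIndex (MulAut.conj (γ * τ) • Γ₀ ⊓ MulAut.conj (γ * σ) • Γ₀)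
      = Γ₀.relIndex (MulAut.conj γ • Γ₀)
          * Γ₀.relIndex (MulAut.conj τ • Γ₀ ⊓ MulAut.conj σ • Γ₀) := by
  set K : Subgroup Γ := MulAut.conj τ • Γ₀ ⊓ MulAut.conj σ • Γ₀ with hKdef
  have hle : ∀ (x : Γ), (∀ y ∈ Γ₀, x⁻¹ * y * x ∈ Γ₀) → Γ₀ ≤ MulAut.conj x • Γ₀ := by
    intro x hx y hy
    refine ⟨x⁻¹ * y * x, hx y hy, ?_⟩
    simp [MulAut.conj, mul_assoc]
  have h1 : Γ₀ ≤ MulAut.conj γ • Γ₀ := hle γ hγ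
  have hK : Γ₀ ≤ K := le_inf (hle τ hτ) (hle σ hσ)
  have h2 : MulAut.conj γ • Γ₀ ≤ MulAut.conj γ • K :=
    Subgroup.pointwise_smul_le_pointwise_smul_iff.mpr hK
  have heq : MulAut.conj (γ * τ) • Γ₀ ⊓ MulAut.conj (γ * σ) • Γ₀ = MulAut.conj γ • K := by
    rw [hKdef, Subgroup.smul_inf, map_mul, map_mul, mul_smul, mul_smul]
  rw [heq, ← Subgroup.relIndex_mul_relIndex Γ₀ (MulAut.conj γ • Γ₀) (MulAut.conj γ • K) h1 h2]
  congr 1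
  have hcomap : Subgroup.comap (MulAut.conj γ).toMonoidHom (MulAut.conj γ • Γ₀) = Γ₀ := by
    rw [smul_eq_map_aux, Subgroup.comap_map_eq_self_of_injective (MulAut.conj γ).injective]
  symm
  calc Γ₀.relIndex K
      = (Subgroup.comap (MulAut.conj γ).toMonoidHom (MulAut.conj γ • Γ₀)).relIndex K := by
        rw [hcomap]
    _ = (MulAut.conj γ • Γ₀).relIndex (Subgroup.map (MulAut.conj γ).toMonoidHom K) :=
        Subgroup.relIndex_comap (H := MulAut.conj γ • Γ₀) (MulAut.conj γ).toMonoidHom K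
    _ = (MulAut.conj γ • Γ₀).relIndex (MulAut.conj γ • K) := by rw [← smul_eq_map_aux]
end

section
/- Let Γ be a group and Γ₀ a subgroup such that (Γ, Γ₀) is a Hecke pair, let Σ = {σ ∈ Γ : σ⁻¹Γ₀σ ⊆ Γ₀}, and assume Σ⁻¹Σ = Γ. For σ, τ ∈ Σ set R(σ) = [Γ₀ : σ⁻¹Γ₀σ] and K(σ,τ) = [τΓ₀τ⁻¹ ∩ σΓ₀σ⁻¹ : Γ₀]. If α, β, σ, τ ∈ Σ satisfy β⁻¹α = τ⁻¹σ, then K(α,β)² · R(σ) · R(τ) = K(σ,τ)² · R(α) · R(β); equivalently, the quantity K(σ,τ)/(R(τ)^{1/2} R(σ)^{1/2}) depends only on the left quotient τ⁻¹σ. -/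
open scoped Pointwise

lemma relindex_mulaut_smul {G : Type*} [Group G] (a : MulAut G) (H K : Subgroup G) :
    (a • H).relIndex (a • K) = H.relIndex K := by
  have h1 : a • H = Subgroup.comap (a.symm.toMonoidHom) H := by
    rw [Subgroup.pointwise_smul_def]
    exact Subgroup.map_equiv_eq_comap_symm' a H
  rw [h1, Subgroup.relIndex_comap]
  congr 1
  have : Subgroup.map a.symm.toMonoidHom (a • K) = a.symm • (a • K) := rfl
  rw [this, ← MulAut.inv_def, inv_smul_smul]

lemma smul_key {G : Type*} [Group G] (Γ₀ : Subgroup G) (σ τ : G)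
    (hσ : MulAut.conj σ⁻¹ • Γ₀ ≤ Γ₀) (hτ : MulAut.conj τ⁻¹ • Γ₀ ≤ Γ₀) :
    (MulAut.conj τ⁻¹ • Γ₀).relIndex Γ₀ =
      Γ₀.relIndex (MulAut.conj τ • Γ₀ ⊓ MulAut.conj σ • Γ₀)
        * (Γ₀ ⊓ MulAut.conj (τ⁻¹ * σ) • Γ₀).relIndex Γ₀ := by
  set D := MulAut.conj τ • Γ₀ ⊓ MulAut.conj σ • Γ₀ with hD
  have hτ' : Γ₀ ≤ MulAut.conj τ • Γ₀ := by
    have := Subgroup.pointwise_smul_le_pointwise_smul_iff (a := MulAut.conj τ)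
      (S := MulAut.conj τ⁻¹ • Γ₀) (T := Γ₀) |>.mpr hτ
    rwa [smul_smul, map_inv, mul_inv_cancel, one_smul] at this
  have hσ' : Γ₀ ≤ MulAut.conj σ • Γ₀ := by
    have := Subgroup.pointwise_smul_le_pointwise_smul_iff (a := MulAut.conj σ)
      (S := MulAut.conj σ⁻¹ • Γ₀) (T := Γ₀) |>.mpr hσ
    rwa [smul_smul, map_inv, mul_inv_cancel, one_smul] at this
  have hΓD : Γ₀ ≤ D := le_inf hτ' hσ'
  have hDeq : MulAut.conj τ⁻¹ • D = Γ₀ ⊓ MulAut.conj (τ⁻¹ * σ) • Γ₀ := by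
    rw [hD, Subgroup.smul_inf, smul_smul, smul_smul, ← map_mul, ← map_mul,
      inv_mul_cancel, map_one MulAut.conj, one_smul]
  have h1 : MulAut.conj τ⁻¹ • Γ₀ ≤ MulAut.conj τ⁻¹ • D :=
    Subgroup.pointwise_smul_le_pointwise_smul_iff.mpr hΓD
  have h2 : MulAut.conj τ⁻¹ • D ≤ Γ₀ := by
    rw [hDeq]; exact inf_le_left
  rw [← Subgroup.relIndex_mul_relIndex (MulAut.conj τ⁻¹ • Γ₀) (MulAut.conj τ⁻¹ • D) Γ₀ h1 h2,
    relindex_mulaut_smul, hDeq]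
lemma conj_inv_smul_le {G : Type*} [Group G] (Γ₀ : Subgroup G) (τ : G)
    (hτ : ∀ x ∈ Γ₀, τ⁻¹ * x * τ ∈ Γ₀) : MulAut.conj τ⁻¹ • Γ₀ ≤ Γ₀ := by
  intro y hy
  rw [Subgroup.mem_pointwise_smul_iff_inv_smul_mem] at hy
  simp only [map_inv, inv_inv, MulAut.smul_def, MulAut.conj_apply] at hy
  have := hτ _ hy
  simpa [mul_assoc] using this


/-- for a Hecke pair `(Γ, Γ₀)` with `Σ = {σ : σ⁻¹Γ₀σ ⊆ Γ₀}` satisfying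
`Σ⁻¹Σ = Γ`, setting `R(σ) = [Γ₀ : σ⁻¹Γ₀σ]` and `K(σ,τ) = [τΓ₀τ⁻¹ ∩ σΓ₀σ⁻¹ : Γ₀]`, if
`α, β, σ, τ ∈ Σ` satisfy `β⁻¹α = τ⁻¹σ`, then
`K(α,β)² R(σ) R(τ) = K(σ,τ)² R(α) R(β)`. -/
theorem hecke_K_over_sqrtR_well_defined
    {Γ : Type*} [Group Γ] (Γ₀ : Subgroup Γ)
    (hHecke : ∀ γ : Γ,
      (QuotientGroup.mk '' DoubleCoset.doubleCoset γ (Γ₀ : Set Γ) (Γ₀ : Set Γ) : Set (Γ ⧸ Γ₀)).Finite)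
    (hOre : ∀ γ : Γ, ∃ τ σ : Γ, (∀ x ∈ Γ₀, τ⁻¹ * x * τ ∈ Γ₀) ∧
      (∀ x ∈ Γ₀, σ⁻¹ * x * σ ∈ Γ₀) ∧ γ = τ⁻¹ * σ)
    (α β σ τ : Γ)
    (hα : ∀ x ∈ Γ₀, α⁻¹ * x * α ∈ Γ₀) (hβ : ∀ x ∈ Γ₀, β⁻¹ * x * β ∈ Γ₀)
    (hσ : ∀ x ∈ Γ₀, σ⁻¹ * x * σ ∈ Γ₀) (hτ : ∀ x ∈ Γ₀, τ⁻¹ * x * τ ∈ Γ₀)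
    (h : β⁻¹ * α = τ⁻¹ * σ) :
    Γ₀.relIndex (MulAut.conj β • Γ₀ ⊓ MulAut.conj α • Γ₀) ^ 2
        * (MulAut.conj σ⁻¹ • Γ₀).relIndex Γ₀ * (MulAut.conj τ⁻¹ • Γ₀).relIndex Γ₀
      = Γ₀.relIndex (MulAut.conj τ • Γ₀ ⊓ MulAut.conj σ • Γ₀) ^ 2
          * (MulAut.conj α⁻¹ • Γ₀).relIndex Γ₀ * (MulAut.conj β⁻¹ • Γ₀).relIndex Γ₀ := by
  have Hα := conj_inv_smul_le Γ₀ α hα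
  have Hβ := conj_inv_smul_le Γ₀ β hβ
  have Hσ := conj_inv_smul_le Γ₀ σ hσ
  have Hτ := conj_inv_smul_le Γ₀ τ hτ
  have h' : α⁻¹ * β = σ⁻¹ * τ := by
    have := congrArg (·⁻¹) h
    simpa [mul_inv_rev] using this
  have e1 := smul_key Γ₀ σ τ Hσ Hτ
  have e2 := smul_key Γ₀ τ σ Hτ Hσ
  have e3 := smul_key Γ₀ α β Hα Hβ
  have e4 := smul_key Γ₀ β α Hβ Hα
  rw [inf_comm (MulAut.conj σ • Γ₀)] at e2
  rw [inf_comm (MulAut.conj α • Γ₀), h'] at e4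
  rw [h] at e3
  rw [e1, e2, e3, e4]
  ring
end

section
/- Let Γ = N ⋊ G be a semidirect product group, Γ₀ a subgroup of N, and S a subsemigroup of G such that S⁻¹S = G and ψ_{s⁻¹}(Γ₀) ⊆ Γ₀ for every s ∈ S. Then (Γ, Γ₀) is a Hecke pair if and only if (N, Γ₀) is a Hecke pair and the index [Γ₀ : ψ_{s⁻¹}(Γ₀)] is finite for every s ∈ S. -/
open scoped Pointwise
open SemidirectProduct

section Aux
variable {G₁ G₂ : Type*} [Group G₁] [Group G₂]

def liftMap (H₁ : Subgroup G₁) (H₂ : Subgroup G₂) (f : G₁ → G₂)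
    (hf : ∀ a b : G₁, a⁻¹ * b ∈ H₁ → (f a)⁻¹ * f b ∈ H₂) : G₁ ⧸ H₁ → G₂ ⧸ H₂ :=
  Quotient.map' f (fun a b h => by
    rw [QuotientGroup.leftRel_apply] at h ⊢
    exact hf a b h)

@[simp] lemma liftMap_mk (H₁ : Subgroup G₁) (H₂ : Subgroup G₂) (f : G₁ → G₂) (hf) (a : G₁) :
    liftMap H₁ H₂ f hf (QuotientGroup.mk a) = QuotientGroup.mk (f a) := rfl

lemma liftMap_injective (H₁ : Subgroup G₁) (H₂ : Subgroup G₂) (f : G₁ → G₂) (hf)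
    (hf' : ∀ a b : G₁, (f a)⁻¹ * f b ∈ H₂ → a⁻¹ * b ∈ H₁) :
    Function.Injective (liftMap H₁ H₂ f hf) := by
  intro x y
  refine Quotient.inductionOn₂' x y fun a b h => ?_
  have h' : (f a)⁻¹ * f b ∈ H₂ :=
    QuotientGroup.leftRel_apply.mp (Quotient.exact' h)
  exact Quotient.sound' (QuotientGroup.leftRel_apply.mpr (hf' a b h'))

end Aux

section SD
variable {N G : Type*} [Group N] [Group G] {φ : G →* MulAut N}

lemma mem_map_inl_iff {Γ₀ : Subgroup N} {x : N ⋊[φ] G} :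
    x ∈ Γ₀.map (SemidirectProduct.inl : N →* N ⋊[φ] G) ↔ x.left ∈ Γ₀ ∧ x.right = 1 := by
  constructor
  · rintro ⟨y, hy, rfl⟩
    simpa using hy
  · rintro ⟨h1, h2⟩
    exact ⟨x.left, h1, by ext <;> simp [h2]⟩

end SD

section Core
variable {N : Type*} [Group N]

lemma finite_range_mono {H K : Subgroup N} (hHK : H ≤ K) {α : Type*} (f : α → N)
    (h : (Set.range fun x => (QuotientGroup.mk (f x) : N ⧸ H)).Finite) :
    (Set.range fun x => (QuotientGroup.mk (f x) : N ⧸ K)).Finite := by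
  have h2 := h.image (liftMap H K id fun a b hab => hHK hab)
  rw [← Set.range_comp] at h2
  simpa [Function.comp_def] using h2

lemma finite_range_core (Γ₀ H : Subgroup N) (hle : H ≤ Γ₀)
    (hidx : (H.subgroupOf Γ₀).index ≠ 0) (n : N)
    (hfin : (Set.range fun x : Γ₀ => (QuotientGroup.mk ((x : N) * n) : N ⧸ Γ₀)).Finite) :
    (Set.range fun x : Γ₀ => (QuotientGroup.mk ((x : N) * n) : N ⧸ H)).Finite := by
  have hfinq : Finite (Γ₀ ⧸ H.subgroupOf Γ₀) := (Nat.card_ne_zero.mp hidx).2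
  set p : N ⧸ H → N ⧸ Γ₀ := liftMap H Γ₀ id (fun a b hab => hle hab) with hp
  set R := Set.range fun x : Γ₀ => (QuotientGroup.mk ((x : N) * n) : N ⧸ H) with hR
  have himg : (p '' R).Finite := by
    have := hfin
    rw [hR, ← Set.range_comp]
    simpa [Function.comp_def, hp] using hfin
  have hslice : ∀ c ∈ p '' R, {r ∈ R | p r = c}.Finite := by
    rintro c ⟨r0, ⟨x₀, rfl⟩, hr0⟩
    have hwd : ∀ a b : Γ₀, a⁻¹ * b ∈ H.subgroupOf Γ₀ →
        ((x₀ : N) * n * a)⁻¹ * ((x₀ : N) * n * b) ∈ H := by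
      intro a b hab
      have h1 : ((a : N))⁻¹ * (b : N) ∈ H := hab
      have : ((x₀ : N) * n * a)⁻¹ * ((x₀ : N) * n * b) = (a : N)⁻¹ * b := by group
      rwa [this]
    set q : Γ₀ ⧸ H.subgroupOf Γ₀ → N ⧸ H :=
      liftMap (H.subgroupOf Γ₀) H (fun h : Γ₀ => (x₀ : N) * n * h) hwd with hq
    refine (Set.finite_range q).subset ?_
    rintro r ⟨⟨x, rfl⟩, hpr⟩
    have heq : (QuotientGroup.mk ((x : N) * n) : N ⧸ Γ₀) = QuotientGroup.mk ((x₀ : N) * n) := by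
      have : p (QuotientGroup.mk ((x : N) * n)) = p (QuotientGroup.mk ((x₀ : N) * n)) := by
        rw [hpr, ← hr0]
      simpa [hp] using this
    have hd : ((x₀ : N) * n)⁻¹ * ((x : N) * n) ∈ Γ₀ :=
      QuotientGroup.leftRel_apply.mp (Quotient.exact' heq.symm)
    refine ⟨QuotientGroup.mk ⟨((x₀ : N) * n)⁻¹ * ((x : N) * n), hd⟩, ?_⟩
    rw [hq, liftMap_mk]
    congr 1
    group
  have hsub : R ⊆ ⋃ c ∈ p '' R, {r ∈ R | p r = c} := by
    intro r hr
    exact Set.mem_biUnion (Set.mem_image_of_mem p hr) ⟨hr, rfl⟩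
  exact (himg.biUnion hslice).subset hsub

end Core

/-- for `Γ = N ⋊ G`, `Γ₀ ⊆ N` and a subsemigroup `S ⊆ G` with `S⁻¹S = G` and
`ψ_{s⁻¹}(Γ₀) ⊆ Γ₀` for all `s ∈ S`: `(Γ, Γ₀)` is a Hecke pair iff `(N, Γ₀)` is a Hecke pair
and `[Γ₀ : ψ_{s⁻¹}(Γ₀)]` is finite for every `s ∈ S`. -/
theorem hecke_pair_semidirect_iff
    {N G : Type*} [Group N] [Group G] (φ : G →* MulAut N)
    (Γ₀ : Subgroup N) (S : Subsemigroup G)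
    (hq : ∀ g : G, ∃ t ∈ S, ∃ s ∈ S, g = t⁻¹ * s)
    (hinv : ∀ s ∈ S, ∀ x ∈ Γ₀, φ s⁻¹ x ∈ Γ₀) :
    (∀ γ : N ⋊[φ] G,
        (QuotientGroup.mk ''
            DoubleCoset.doubleCoset γ (Γ₀.map (SemidirectProduct.inl : N →* N ⋊[φ] G) : Set (N ⋊[φ] G))
              (Γ₀.map (SemidirectProduct.inl : N →* N ⋊[φ] G) : Set (N ⋊[φ] G)) :
          Set ((N ⋊[φ] G) ⧸ Γ₀.map (SemidirectProduct.inl : N →* N ⋊[φ] G))).Finite)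
      ↔ ((∀ n : N,
            (QuotientGroup.mk '' DoubleCoset.doubleCoset n (Γ₀ : Set N) (Γ₀ : Set N) :
              Set (N ⧸ Γ₀)).Finite) ∧
          ∀ s ∈ S, (Γ₀.map (φ s⁻¹).toMonoidHom).relIndex Γ₀ ≠ 0) := by
  set Γ₀' : Subgroup (N ⋊[φ] G) := Γ₀.map (SemidirectProduct.inl : N →* N ⋊[φ] G) with hΓ₀'
  constructor
  · intro hΓ
    constructor
    · intro n
      have hwd : ∀ a b : N, a⁻¹ * b ∈ Γ₀ → (inl a : N ⋊[φ] G)⁻¹ * inl b ∈ Γ₀' := by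
        intro a b hab
        rw [mem_map_inl_iff]
        constructor <;> simp [hab]
      set j : N ⧸ Γ₀ → (N ⋊[φ] G) ⧸ Γ₀' := liftMap Γ₀ Γ₀' inl hwd with hj
      refine Set.Finite.of_finite_image (f := j) ?_ ?_
      · refine (hΓ (inl n)).subset ?_
        rintro _ ⟨_, ⟨m, hm, rfl⟩, rfl⟩
        obtain ⟨x, hx, y, hy, rfl⟩ := DoubleCoset.mem_doubleCoset.mp hm
        refine ⟨inl (x * n * y), ?_, rfl⟩
        exact DoubleCoset.mem_doubleCoset.mpr ⟨inl x, ⟨x, hx, rfl⟩, inl y, ⟨y, hy, rfl⟩, by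
          simp [map_mul]⟩
      · intro a _ b _ hab
        refine liftMap_injective Γ₀ Γ₀' inl hwd ?_ hab
        intro a b hab
        rw [mem_map_inl_iff] at hab
        have := hab.1
        simpa using this
    · intro s hs
      have hΓs := hΓ (inr s⁻¹)
      set H' : Subgroup N := Γ₀.map (φ s⁻¹).toMonoidHom with hH'
      have hsimp : ∀ (u : G) (y : N), φ u (φ u⁻¹ y) = y := by
        intro u y
        have h1 : φ u * φ u⁻¹ = 1 := by rw [← map_mul, mul_inv_cancel, map_one]
        calc φ u (φ u⁻¹ y) = (φ u * φ u⁻¹) y := rfl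
        _ = y := by rw [h1]; rfl
      have hsimp2 : ∀ y : N, φ s⁻¹ (φ s y) = y := by
        intro y
        simpa using hsimp s⁻¹ y
      have hmemH' : ∀ z : N, z ∈ H' ↔ φ s z ∈ Γ₀ := by
        intro z
        constructor
        · rintro ⟨w, hw, rfl⟩
          simpa [hsimp] using hw
        · intro hz
          exact ⟨φ s z, hz, by simpa using hsimp2 z⟩
      have hcomp : ∀ a b : Γ₀, ((inl (a : N) * inr s⁻¹ : N ⋊[φ] G))⁻¹ *
          (inl (b : N) * inr s⁻¹) = inl (φ s ((a : N)⁻¹ * (b : N))) := by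
        intro a b
        ext <;> simp [mul_left, mul_right, inv_left, inv_right, map_mul]
      have hwd : ∀ a b : Γ₀, a⁻¹ * b ∈ H'.subgroupOf Γ₀ →
          ((inl (a : N) * inr s⁻¹ : N ⋊[φ] G))⁻¹ * (inl (b : N) * inr s⁻¹) ∈ Γ₀' := by
        intro a b hab
        have h1 : (a : N)⁻¹ * (b : N) ∈ H' := by
          have := Subgroup.mem_subgroupOf.mp hab
          simpa using this
        rw [hcomp, mem_map_inl_iff]
        exact ⟨by simpa using (hmemH' _).mp h1, rfl⟩
      set q : (Γ₀ ⧸ H'.subgroupOf Γ₀) → (N ⋊[φ] G) ⧸ Γ₀' :=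
        liftMap (H'.subgroupOf Γ₀) Γ₀' (fun x : Γ₀ => inl (x : N) * inr s⁻¹) hwd with hqdef
      have hinj : Function.Injective q := by
        refine liftMap_injective _ _ _ hwd ?_
        intro a b hab
        rw [hcomp, mem_map_inl_iff] at hab
        have h2 : φ s ((a : N)⁻¹ * (b : N)) ∈ Γ₀ := by simpa using hab.1
        refine Subgroup.mem_subgroupOf.mpr ?_
        have h3 : ((a : N)⁻¹ * (b : N)) ∈ H' := (hmemH' _).mpr h2
        simpa using h3
      have hrange : Set.range q ⊆ (QuotientGroup.mk '' DoubleCoset.doubleCoset (inr s⁻¹ : N ⋊[φ] G)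
          (Γ₀' : Set (N ⋊[φ] G)) (Γ₀' : Set (N ⋊[φ] G))) := by
        rintro _ ⟨x, rfl⟩
        refine Quotient.inductionOn' x fun a => ?_
        refine ⟨inl (a : N) * inr s⁻¹, ?_, rfl⟩
        refine DoubleCoset.mem_doubleCoset.mpr ⟨inl (a : N), ⟨(a : N), a.2, rfl⟩, 1, Γ₀'.one_mem, ?_⟩
        rw [mul_one]
      have hfin : Finite (Γ₀ ⧸ H'.subgroupOf Γ₀) := by
        have h4 : (Set.range q).Finite := hΓs.subset hrange
        have h5 : Finite (Set.range q) := h4.to_subtype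
        exact Finite.of_injective (Set.rangeFactorization q)
          (fun a b h => hinj (congrArg Subtype.val h))
      have : (H'.subgroupOf Γ₀).index ≠ 0 := Subgroup.index_ne_zero_of_finite
      exact this
  · rintro ⟨hheck, hidx⟩ γ
    obtain ⟨n, g⟩ := γ
    obtain ⟨t, ht, s, hs, hg⟩ := hq g
    subst hg
    have hsimp : ∀ (u : G) (y : N), φ u (φ u⁻¹ y) = y := by
      intro u y
      rw [map_inv]
      exact MulAut.apply_inv_self N (φ u) y
    have hsimp' : ∀ (u : G) (y : N), φ u⁻¹ (φ u y) = y := by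
      intro u y
      rw [map_inv]
      exact MulAut.inv_apply_self N (φ u) y
    set K : Subgroup N := Γ₀.map (φ (t⁻¹ * s)).toMonoidHom with hK
    set H : Subgroup N := Γ₀.map (φ t⁻¹).toMonoidHom with hH
    have hle1 : H ≤ Γ₀ := by
      rintro _ ⟨x, hx, rfl⟩
      exact hinv t ht x hx
    have hle2 : H ≤ K := by
      rintro _ ⟨x, hx, rfl⟩
      refine ⟨φ s⁻¹ x, hinv s hs x hx, ?_⟩
      show φ (t⁻¹ * s) (φ s⁻¹ x) = (φ t⁻¹).toMonoidHom x
      rw [map_mul]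
      show φ t⁻¹ (φ s (φ s⁻¹ x)) = φ t⁻¹ x
      rw [hsimp s x]
    have hbase : (Set.range fun x : Γ₀ => (QuotientGroup.mk ((x : N) * n) : N ⧸ Γ₀)).Finite := by
      refine (hheck n).subset ?_
      rintro _ ⟨x, rfl⟩
      exact ⟨(x : N) * n, DoubleCoset.mem_doubleCoset.mpr ⟨x, x.2, 1, Γ₀.one_mem, by rw [mul_one]⟩, rfl⟩
    have hidx' : (H.subgroupOf Γ₀).index ≠ 0 := hidx t ht
    have key : (Set.range fun x : Γ₀ => (QuotientGroup.mk ((x : N) * n) : N ⧸ K)).Finite :=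
      finite_range_mono hle2 _ (finite_range_core Γ₀ H hle1 hidx' n hbase)
    have hwd : ∀ a b : N, a⁻¹ * b ∈ K →
        ((inl a * inr (t⁻¹ * s) : N ⋊[φ] G))⁻¹ * (inl b * inr (t⁻¹ * s)) ∈ Γ₀' := by
      intro a b hab
      obtain ⟨z, hz, hzeq⟩ := hab
      rw [mem_map_inl_iff]
      have hb : b = a * φ (t⁻¹ * s) z := by
        rw [show φ (t⁻¹ * s) z = a⁻¹ * b from hzeq]
        group
      subst hb
      constructor
      · simp [mul_left, mul_right, inv_left, inv_right, map_mul, hsimp']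
        exact hz
      · simp [mul_right, inv_right]
    set hmap : (N ⧸ K) → (N ⋊[φ] G) ⧸ Γ₀' :=
      liftMap K Γ₀' (fun y => inl y * inr (t⁻¹ * s)) hwd with hmapdef
    refine (key.image hmap).subset ?_
    rintro _ ⟨m, hm, rfl⟩
    obtain ⟨A, hA, B, hB, rfl⟩ := DoubleCoset.mem_doubleCoset.mp hm
    obtain ⟨x, hx, rfl⟩ := hA
    obtain ⟨y, hy, rfl⟩ := hB
    refine ⟨QuotientGroup.mk ((x : N) * n), ⟨(⟨x, hx⟩ : Γ₀), rfl⟩, ?_⟩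
    rw [hmapdef, liftMap_mk]
    refine Quotient.sound' (QuotientGroup.leftRel_apply.mpr ?_)
    rw [mem_map_inl_iff]
    constructor
    · simp only [mul_left, mul_right, inv_left, inv_right, map_mul, map_inv, mul_assoc,
        MulAut.inv_apply_self, MulAut.apply_inv_self, inv_mul_cancel_left, map_one, one_mul,
        mul_one, inv_one]
      simpa [mul_assoc] using hy
    · simp [mul_right, inv_right]
end

section
/- Let Γ = N ⋊ G be a semidirect product group, Γ₀ a subgroup of N, and S a subsemigroup of G such that ψ_{s⁻¹}(Γ₀) ⊆ Γ₀ and [Γ₀ : ψ_{s⁻¹}(Γ₀)] < ∞ for every s ∈ S, and suppose (N, Γ₀) is a Hecke pair. Then for all t, s ∈ S and n ∈ N, the double coset Γ₀ t⁻¹ n s Γ₀ in Γ is the union of at most R_N(n) · [Γ₀ : ψ_{s⁻¹}(Γ₀)] right cosets of Γ₀, where R_N(n) is the (finite) number of right cosets Γ₀x contained in the double coset Γ₀nΓ₀ inside N. -/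
open scoped Pointwise

/-- with `Γ = N ⋊ G`, `Γ₀ ⊆ N`, `S ⊆ G` a subsemigroup with
`ψ_{s⁻¹}(Γ₀) ⊆ Γ₀` and `[Γ₀ : ψ_{s⁻¹}(Γ₀)] < ∞` for all `s ∈ S`, and `(N, Γ₀)` a Hecke
pair: for all `t, s ∈ S` and `n ∈ N`, the double coset `Γ₀ t⁻¹ n s Γ₀` in `Γ` is the union
of finitely many right cosets of `Γ₀`, at most `R_N(n) · [Γ₀ : ψ_{s⁻¹}(Γ₀)]` of them. -/
theorem hecke_double_coset_right_coset_bound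
    {N G : Type*} [Group N] [Group G] (φ : G →* MulAut N)
    (Γ₀ : Subgroup N) (S : Subsemigroup G)
    (hinv : ∀ s ∈ S, ∀ x ∈ Γ₀, φ s⁻¹ x ∈ Γ₀)
    (hfin : ∀ s ∈ S, (Γ₀.map (φ s⁻¹).toMonoidHom).relIndex Γ₀ ≠ 0)
    (hHeckeN : ∀ n : N,
      (QuotientGroup.mk '' DoubleCoset.doubleCoset n (Γ₀ : Set N) (Γ₀ : Set N) : Set (N ⧸ Γ₀)).Finite) :
    ∀ t ∈ S, ∀ s ∈ S, ∀ n : N,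
      (Quotient.mk (QuotientGroup.rightRel
            (Γ₀.map (SemidirectProduct.inl : N →* N ⋊[φ] G))) ''
          DoubleCoset.doubleCoset
            ((SemidirectProduct.inr t)⁻¹ * SemidirectProduct.inl n * SemidirectProduct.inr s)
            (Γ₀.map (SemidirectProduct.inl : N →* N ⋊[φ] G) : Set (N ⋊[φ] G))
            (Γ₀.map (SemidirectProduct.inl : N →* N ⋊[φ] G) : Set (N ⋊[φ] G))).Finite ∧
      Nat.card
          (Quotient.mk (QuotientGroup.rightRel
              (Γ₀.map (SemidirectProduct.inl : N →* N ⋊[φ] G))) ''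
            DoubleCoset.doubleCoset
              ((SemidirectProduct.inr t)⁻¹ * SemidirectProduct.inl n * SemidirectProduct.inr s)
              (Γ₀.map (SemidirectProduct.inl : N →* N ⋊[φ] G) : Set (N ⋊[φ] G))
              (Γ₀.map (SemidirectProduct.inl : N →* N ⋊[φ] G) : Set (N ⋊[φ] G)))
        ≤ Nat.card
              (Quotient.mk (QuotientGroup.rightRel Γ₀) ''
                DoubleCoset.doubleCoset n (Γ₀ : Set N) (Γ₀ : Set N))
            * (Γ₀.map (φ s⁻¹).toMonoidHom).relIndex Γ₀ := by
  classical
  intro t ht s hs n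
  set Γ₀' : Subgroup (N ⋊[φ] G) := Γ₀.map (SemidirectProduct.inl : N →* N ⋊[φ] G) with hΓ₀'def
  set H : Subgroup N := Γ₀.map (φ s⁻¹).toMonoidHom with hHdef
  -- membership characterization for Γ₀'
  have mem_Γ₀' : ∀ z : N, ∀ g : G, ((⟨z, g⟩ : N ⋊[φ] G) ∈ Γ₀') ↔ (z ∈ Γ₀ ∧ g = 1) := by
    intro z g
    constructor
    · rintro ⟨a, ha, hEq⟩
      have h1 : a = z := congrArg SemidirectProduct.left hEq
      have h2 : (1 : G) = g := congrArg SemidirectProduct.right hEq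
      exact ⟨h1 ▸ ha, h2.symm⟩
    · rintro ⟨hz, rfl⟩; exact ⟨z, hz, rfl⟩
  -- right-coset relation in the semidirect product
  have qΓ_eq : ∀ (x y : N) (g : G),
      (Quotient.mk (QuotientGroup.rightRel Γ₀') (⟨x, g⟩ : N ⋊[φ] G) =
        Quotient.mk (QuotientGroup.rightRel Γ₀') (⟨y, g⟩ : N ⋊[φ] G)) ↔ y * x⁻¹ ∈ Γ₀ := by
    intro x y g
    have hcalc : (⟨y, g⟩ : N ⋊[φ] G) * (⟨x, g⟩ : N ⋊[φ] G)⁻¹ = ⟨y * x⁻¹, 1⟩ := by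
      ext <;> simp
    have hmem : ((⟨y, g⟩ : N ⋊[φ] G) * (⟨x, g⟩ : N ⋊[φ] G)⁻¹ ∈ Γ₀') ↔ y * x⁻¹ ∈ Γ₀ := by
      rw [hcalc, mem_Γ₀']; simp
    exact ⟨fun h => hmem.mp (QuotientGroup.rightRel_apply.mp (Quotient.exact h)),
      fun h => Quotient.sound (QuotientGroup.rightRel_apply.mpr (hmem.mpr h))⟩
  have qN_eq : ∀ x y : N,
      (Quotient.mk (QuotientGroup.rightRel Γ₀) x = Quotient.mk (QuotientGroup.rightRel Γ₀) y)
        ↔ y * x⁻¹ ∈ Γ₀ := by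
    intro x y
    exact ⟨fun h => QuotientGroup.rightRel_apply.mp (Quotient.exact h),
      fun h => Quotient.sound (QuotientGroup.rightRel_apply.mpr h)⟩
  -- the map Φ from right cosets of Γ₀ in N to right cosets of Γ₀' in N ⋊ G
  have Φwd : ∀ a b : N, (QuotientGroup.rightRel Γ₀) a b →
      Quotient.mk (QuotientGroup.rightRel Γ₀') (⟨φ t⁻¹ a, t⁻¹ * s⟩ : N ⋊[φ] G) =
      Quotient.mk (QuotientGroup.rightRel Γ₀') (⟨φ t⁻¹ b, t⁻¹ * s⟩ : N ⋊[φ] G) := by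
    intro a b hab
    rw [QuotientGroup.rightRel_apply] at hab
    rw [qΓ_eq]
    simpa [map_mul] using hinv t ht _ hab
  set Φ : Quotient (QuotientGroup.rightRel Γ₀) → Quotient (QuotientGroup.rightRel Γ₀') :=
    Quotient.lift (fun x : N =>
      Quotient.mk (QuotientGroup.rightRel Γ₀') (⟨φ t⁻¹ x, t⁻¹ * s⟩ : N ⋊[φ] G)) Φwd with hΦdef
  -- right translation on right cosets
  have ρwd : ∀ m : N, ∀ a b : N, (QuotientGroup.rightRel Γ₀) a b →
      Quotient.mk (QuotientGroup.rightRel Γ₀) (a * m) =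
      Quotient.mk (QuotientGroup.rightRel Γ₀) (b * m) := by
    intro m a b hab
    rw [QuotientGroup.rightRel_apply] at hab
    rw [qN_eq]
    have : b * m * (a * m)⁻¹ = b * a⁻¹ := by group
    rw [this]; exact hab
  set ρ : N → Quotient (QuotientGroup.rightRel Γ₀) → Quotient (QuotientGroup.rightRel Γ₀) :=
    fun m => Quotient.lift (fun x : N => Quotient.mk (QuotientGroup.rightRel Γ₀) (x * m)) (ρwd m)
    with hρdef
  -- DI : the set of right cosets in the double coset of n in N
  set DI : Set (Quotient (QuotientGroup.rightRel Γ₀)) :=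
    Quotient.mk (QuotientGroup.rightRel Γ₀) '' DoubleCoset.doubleCoset n (Γ₀ : Set N) (Γ₀ : Set N) with hDIdef
  -- DI is finite, via inversion to left cosets
  have Jwd : ∀ a b : N, (QuotientGroup.rightRel Γ₀) a b →
      (QuotientGroup.mk a⁻¹ : N ⧸ Γ₀) = QuotientGroup.mk b⁻¹ := by
    intro a b hab
    rw [QuotientGroup.rightRel_apply] at hab
    rw [QuotientGroup.eq]
    simpa using Γ₀.inv_mem hab
  set J : Quotient (QuotientGroup.rightRel Γ₀) → N ⧸ Γ₀ :=
    Quotient.lift (fun x : N => (QuotientGroup.mk x⁻¹ : N ⧸ Γ₀)) Jwd with hJdef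
  have Jinj : Function.Injective J := by
    intro q1 q2
    refine Quotient.inductionOn₂ q1 q2 ?_
    intro a b h
    have h' : (QuotientGroup.mk a⁻¹ : N ⧸ Γ₀) = QuotientGroup.mk b⁻¹ := h
    rw [QuotientGroup.eq] at h'
    refine Quotient.sound (QuotientGroup.rightRel_apply.mpr ?_)
    simpa using Γ₀.inv_mem h'
  have hDIfin : DI.Finite := by
    have himg : J '' DI ⊆ (QuotientGroup.mk '' DoubleCoset.doubleCoset n⁻¹ (Γ₀ : Set N) (Γ₀ : Set N)
        : Set (N ⧸ Γ₀)) := by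
      rintro _ ⟨_, ⟨x, hx, rfl⟩, rfl⟩
      rcases DoubleCoset.mem_doubleCoset.mp hx with ⟨u, hu, v, hv, rfl⟩
      refine ⟨(u * n * v)⁻¹, DoubleCoset.mem_doubleCoset.mpr ⟨v⁻¹, Γ₀.inv_mem hv, u⁻¹, Γ₀.inv_mem hu, by group⟩, rfl⟩
    exact Set.Finite.of_finite_image (((hHeckeN n⁻¹).subset himg)) (Jinj.injOn)
  haveI : Finite ↥DI := hDIfin.to_subtype
  -- Q' : right cosets of H ∩ Γ₀ in Γ₀
  set Q' : Type _ := Quotient (QuotientGroup.rightRel (H.subgroupOf Γ₀)) with hQ'def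
  have cardQ' : Nat.card Q' = H.relIndex Γ₀ := by
    rw [Subgroup.relIndex, Subgroup.index]
    exact Nat.card_congr (QuotientGroup.quotientRightRelEquivQuotientLeftRel _)
  haveI : Finite Q' := by
    have : Nat.card Q' ≠ 0 := by rw [cardQ']; exact hfin s hs
    exact (Nat.card_ne_zero.mp this).2
  -- the combined map
  set F : Q' × ↥DI → Quotient (QuotientGroup.rightRel Γ₀) :=
    fun p => ρ (φ s ((p.1.out : Γ₀) : N)) p.2.val with hFdef
  -- the target set is contained in the range of Φ ∘ F
  have hT : (Quotient.mk (QuotientGroup.rightRel Γ₀') ''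
      DoubleCoset.doubleCoset
        ((SemidirectProduct.inr t)⁻¹ * SemidirectProduct.inl n * SemidirectProduct.inr s)
        (Γ₀' : Set (N ⋊[φ] G)) (Γ₀' : Set (N ⋊[φ] G)))
      ⊆ Set.range (Φ ∘ F) := by
    rintro _ ⟨x, hx, rfl⟩
    rcases DoubleCoset.mem_doubleCoset.mp hx with ⟨u, hu, v, hv, rfl⟩
    rcases hu with ⟨a, ha, rfl⟩
    rcases hv with ⟨b, hb, rfl⟩
    -- decompose b along right cosets of H ∩ Γ₀
    set q : Q' := Quotient.mk (QuotientGroup.rightRel (H.subgroupOf Γ₀)) (⟨b, hb⟩ : Γ₀) with hqdef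
    set r : Γ₀ := q.out with hrdef
    have hqr : Quotient.mk (QuotientGroup.rightRel (H.subgroupOf Γ₀)) r = q := Quotient.out_eq q
    have hrel : ((⟨b, hb⟩ : Γ₀) * r⁻¹ : Γ₀) ∈ H.subgroupOf Γ₀ := by
      rw [hqdef] at hqr
      exact QuotientGroup.rightRel_apply.mp (Quotient.exact hqr)
    rw [Subgroup.mem_subgroupOf] at hrel
    rcases hrel with ⟨d, hd, hd'⟩
    -- hd' : φ s⁻¹ d = ↑(⟨b, hb⟩ * r⁻¹)
    have hb_eq : b = φ s⁻¹ d * (r : N) := by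
      have : (φ s⁻¹).toMonoidHom d = b * (r : N)⁻¹ := hd'
      have h2 : φ s⁻¹ d = b * (r : N)⁻¹ := this
      rw [h2]; group
    have hkey : n * φ s b = (n * d) * φ s (r : N) := by
      rw [hb_eq, map_mul]
      have : φ s (φ s⁻¹ d) = d := by
        rw [map_inv]
        exact (φ s).apply_symm_apply d
      rw [this, mul_assoc]
    have hnd : n * d ∈ DoubleCoset.doubleCoset n (Γ₀ : Set N) (Γ₀ : Set N) :=
      DoubleCoset.mem_doubleCoset.mpr ⟨1, Γ₀.one_mem, d, hd, by group⟩
    refine ⟨⟨q, ⟨Quotient.mk (QuotientGroup.rightRel Γ₀) (n * d), ⟨n * d, hnd, rfl⟩⟩⟩, ?_⟩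
    -- compute both sides
    have hF : F ⟨q, ⟨Quotient.mk (QuotientGroup.rightRel Γ₀) (n * d), ⟨n * d, hnd, rfl⟩⟩⟩
        = Quotient.mk (QuotientGroup.rightRel Γ₀) (n * φ s b) := by
      show Quotient.mk (QuotientGroup.rightRel Γ₀) ((n * d) * φ s ((q.out : Γ₀) : N)) = _
      rw [← hrdef, ← hkey]
    rw [Function.comp_apply, hF]
    have hΦval : Φ (Quotient.mk (QuotientGroup.rightRel Γ₀) (n * φ s b)) =
        Quotient.mk (QuotientGroup.rightRel Γ₀') (⟨φ t⁻¹ (n * φ s b), t⁻¹ * s⟩ : N ⋊[φ] G) := rfl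
    rw [hΦval]
    -- now show this equals the class of the doset element
    have hxeq : SemidirectProduct.inl a *
        ((SemidirectProduct.inr t)⁻¹ * SemidirectProduct.inl n * SemidirectProduct.inr s) *
        SemidirectProduct.inl b = (⟨a * φ t⁻¹ (n * φ s b), t⁻¹ * s⟩ : N ⋊[φ] G) := by
      ext <;> simp [map_mul, mul_assoc]
    rw [hxeq]
    rw [qΓ_eq]
    have : a * φ t⁻¹ (n * φ s b) * (φ t⁻¹ (n * φ s b))⁻¹ = a := by group
    rw [this]; exact ha
  constructor
  · exact Set.Finite.subset (Set.finite_range (Φ ∘ F)) hT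
  · calc Nat.card ((Quotient.mk (QuotientGroup.rightRel Γ₀')) ''
          DoubleCoset.doubleCoset ((SemidirectProduct.inr t)⁻¹ * SemidirectProduct.inl n *
            SemidirectProduct.inr s) (Γ₀' : Set (N ⋊[φ] G)) (Γ₀' : Set (N ⋊[φ] G)))
        = ((Quotient.mk (QuotientGroup.rightRel Γ₀')) ''
          DoubleCoset.doubleCoset ((SemidirectProduct.inr t)⁻¹ * SemidirectProduct.inl n *
            SemidirectProduct.inr s) (Γ₀' : Set (N ⋊[φ] G)) (Γ₀' : Set (N ⋊[φ] G))).ncard :=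
          Nat.card_coe_set_eq _
      _ ≤ (Set.range (Φ ∘ F)).ncard := Set.ncard_le_ncard hT (Set.finite_range _)
      _ = Nat.card (Set.range (Φ ∘ F)) := (Nat.card_coe_set_eq _).symm
      _ ≤ Nat.card (Q' × ↥DI) := Finite.card_range_le _
      _ = Nat.card Q' * Nat.card ↥DI := Nat.card_prod _ _
      _ = Nat.card ↥DI * (H.relIndex Γ₀) := by rw [cardQ', mul_comm]
end

section
/- Let Γ = N ⋊ G be a semidirect product group, Γ₀ a subgroup of N, and s, t ∈ G with ψ_{s⁻¹}(Γ₀) ⊆ Γ₀ and ψ_{t⁻¹}(Γ₀) ⊆ Γ₀. Then for every x ∈ N one has the set identity Γ₀ t⁻¹ Γ₀ x Γ₀ s Γ₀ = Γ₀ t⁻¹ x s Γ₀ in Γ. -/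
open scoped Pointwise

/-- with `Γ = N ⋊ G`, `Γ₀ ⊆ N`, and `s, t ∈ G` with `ψ_{s⁻¹}(Γ₀) ⊆ Γ₀` and
`ψ_{t⁻¹}(Γ₀) ⊆ Γ₀`: for every `x ∈ N` one has
`Γ₀ t⁻¹ Γ₀ x Γ₀ s Γ₀ = Γ₀ t⁻¹ x s Γ₀` in `Γ`. -/
theorem semidirect_double_coset_product
    {N G : Type*} [Group N] [Group G] (φ : G →* MulAut N)
    (Γ₀ : Subgroup N) (s t : G)
    (hs : ∀ x ∈ Γ₀, φ s⁻¹ x ∈ Γ₀) (ht : ∀ x ∈ Γ₀, φ t⁻¹ x ∈ Γ₀) :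
    ∀ x : N,
      (Γ₀.map (SemidirectProduct.inl : N →* N ⋊[φ] G) : Set (N ⋊[φ] G))
          * {(SemidirectProduct.inr t)⁻¹}
          * (Γ₀.map (SemidirectProduct.inl : N →* N ⋊[φ] G) : Set (N ⋊[φ] G))
          * {SemidirectProduct.inl x}
          * (Γ₀.map (SemidirectProduct.inl : N →* N ⋊[φ] G) : Set (N ⋊[φ] G))
          * {SemidirectProduct.inr s}
          * (Γ₀.map (SemidirectProduct.inl : N →* N ⋊[φ] G) : Set (N ⋊[φ] G))
        = DoubleCoset.doubleCoset
            ((SemidirectProduct.inr t)⁻¹ * SemidirectProduct.inl x * SemidirectProduct.inr s)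
            (Γ₀.map (SemidirectProduct.inl : N →* N ⋊[φ] G) : Set (N ⋊[φ] G))
            (Γ₀.map (SemidirectProduct.inl : N →* N ⋊[φ] G) : Set (N ⋊[φ] G)) := by
  intro x
  set H : Set (N ⋊[φ] G) := (Γ₀.map (SemidirectProduct.inl : N →* N ⋊[φ] G) : Set (N ⋊[φ] G))
    with hH
  have hHH : H * H = H := coe_mul_coe _
  have h1 : (1 : N ⋊[φ] G) ∈ H := Subgroup.one_mem _
  -- commutation one way: if `φ g` preserves `Γ₀`, then `{inr g} * H ⊆ H * {inr g}`
  have key : ∀ g : G, (∀ n ∈ Γ₀, φ g n ∈ Γ₀) →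
      ({SemidirectProduct.inr g} : Set (N ⋊[φ] G)) * H ⊆ H * {SemidirectProduct.inr g} := by
    intro g hg y hy
    rw [Set.mem_mul] at hy
    obtain ⟨a, ha, b, hb, rfl⟩ := hy
    rw [Set.mem_singleton_iff] at ha
    subst ha
    obtain ⟨n, hn, rfl⟩ := hb
    have heq : SemidirectProduct.inr g * SemidirectProduct.inl n
        = SemidirectProduct.inl (φ g n) * (SemidirectProduct.inr g : N ⋊[φ] G) := by
      rw [SemidirectProduct.inl_aut, map_inv]; group
    rw [heq]
    exact Set.mul_mem_mul ⟨φ g n, hg n hn, rfl⟩ rfl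
  -- commutation the other way: if `φ g⁻¹` preserves `Γ₀`, then `H * {inr g} ⊆ {inr g} * H`
  have key' : ∀ g : G, (∀ n ∈ Γ₀, φ g⁻¹ n ∈ Γ₀) →
      H * ({SemidirectProduct.inr g} : Set (N ⋊[φ] G)) ⊆ {SemidirectProduct.inr g} * H := by
    intro g hg y hy
    rw [Set.mem_mul] at hy
    obtain ⟨a, ha, b, hb, rfl⟩ := hy
    rw [Set.mem_singleton_iff] at hb
    subst hb
    obtain ⟨n, hn, rfl⟩ := ha
    have heq : SemidirectProduct.inl n * (SemidirectProduct.inr g : N ⋊[φ] G)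
        = SemidirectProduct.inr g * SemidirectProduct.inl (φ g⁻¹ n) := by
      rw [map_inv, SemidirectProduct.inl_aut_inv, map_inv SemidirectProduct.inr]; group
    rw [heq]
    exact Set.mul_mem_mul rfl ⟨φ g⁻¹ n, hg n hn, rfl⟩
  -- `H t⁻¹ H = H t⁻¹`
  have lemA : H * ({(SemidirectProduct.inr t)⁻¹} : Set (N ⋊[φ] G)) * H
      = H * {(SemidirectProduct.inr t)⁻¹} := by
    have : ((SemidirectProduct.inr t)⁻¹ : N ⋊[φ] G) = SemidirectProduct.inr t⁻¹ := by
      simp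
    rw [this]
    apply Set.Subset.antisymm
    · calc H * {SemidirectProduct.inr t⁻¹} * H
          = H * ({SemidirectProduct.inr t⁻¹} * H) := by rw [mul_assoc]
        _ ⊆ H * (H * {SemidirectProduct.inr t⁻¹}) := Set.mul_subset_mul_left (key t⁻¹ ht)
        _ = H * {SemidirectProduct.inr t⁻¹} := by rw [← mul_assoc, hHH]
    · exact Set.subset_mul_left _ h1
  -- `H s H = s H`
  have lemB : H * ({SemidirectProduct.inr s} : Set (N ⋊[φ] G)) * H
      = {SemidirectProduct.inr s} * H := by
    apply Set.Subset.antisymm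
    · calc H * {SemidirectProduct.inr s} * H
          ⊆ {SemidirectProduct.inr s} * H * H := Set.mul_subset_mul_right (key' s hs)
        _ = {SemidirectProduct.inr s} * H := by rw [mul_assoc, hHH]
    · intro y hy
      rw [Set.mem_mul] at hy
      obtain ⟨a, ha, b, hb, rfl⟩ := hy
      rw [Set.mem_singleton_iff] at ha
      subst ha
      rw [show SemidirectProduct.inr s * b = 1 * SemidirectProduct.inr s * b by group]
      exact Set.mul_mem_mul (Set.mul_mem_mul h1 rfl) hb
  calc H * {(SemidirectProduct.inr t)⁻¹} * H * {SemidirectProduct.inl x} * H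
        * {SemidirectProduct.inr s} * H
      = (H * {(SemidirectProduct.inr t)⁻¹} * H) * {SemidirectProduct.inl x}
        * (H * {SemidirectProduct.inr s} * H) := by
        simp only [mul_assoc]
    _ = (H * {(SemidirectProduct.inr t)⁻¹}) * {SemidirectProduct.inl x}
        * ({SemidirectProduct.inr s} * H) := by rw [lemA, lemB]
    _ = H * ({(SemidirectProduct.inr t)⁻¹} * {SemidirectProduct.inl x}
        * {SemidirectProduct.inr s}) * H := by simp only [mul_assoc]
    _ = H * {(SemidirectProduct.inr t)⁻¹ * SemidirectProduct.inl x
        * SemidirectProduct.inr s} * H := by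
        rw [Set.singleton_mul_singleton, Set.singleton_mul_singleton]
    _ = DoubleCoset.doubleCoset ((SemidirectProduct.inr t)⁻¹ * SemidirectProduct.inl x
        * SemidirectProduct.inr s) H H := rfl
end

section
/- Let d ≥ 1, let G = GL⁺_d(ℚ) be the group of rational d×d matrices with positive determinant acting on N = ℚ^d by ψ_g(n) = (gᵗ)⁻¹ n (where gᵗ is the transpose of g), and let Γ = ℚ^d ⋊ GL⁺_d(ℚ) be the semidirect product. Then (Γ, ℤ^d) is a Hecke pair, i.e. every double coset ℤ^d γ ℤ^d in Γ is a finite union of left cosets γ'ℤ^d, where ℤ^d is viewed as a subgroup of the normal part ℚ^d. -/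
open scoped Pointwise Matrix

/-- The additive automorphism `v ↦ (gᵗ)⁻¹ v` of `F^d`, for `g ∈ GL_d(F)`. -/
noncomputable def transposeInvAddAut {d : ℕ} {F : Type*} [Field F] (g : GL (Fin d) F) :
    AddAut (Fin d → F) where
  toFun v := (↑(g⁻¹) : Matrix (Fin d) (Fin d) F)ᵀ *ᵥ v
  invFun v := (↑g : Matrix (Fin d) (Fin d) F)ᵀ *ᵥ v
  left_inv v := by
    have h : (↑g : Matrix (Fin d) (Fin d) F)ᵀ * (↑(g⁻¹) : Matrix (Fin d) (Fin d) F)ᵀ = 1 := by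
      rw [← Matrix.transpose_mul, ← Units.val_mul, inv_mul_cancel, Units.val_one,
        Matrix.transpose_one]
    dsimp only
    rw [Matrix.mulVec_mulVec, h, Matrix.one_mulVec]
  right_inv v := by
    have h : (↑(g⁻¹) : Matrix (Fin d) (Fin d) F)ᵀ * (↑g : Matrix (Fin d) (Fin d) F)ᵀ = 1 := by
      rw [← Matrix.transpose_mul, ← Units.val_mul, mul_inv_cancel, Units.val_one,
        Matrix.transpose_one]
    dsimp only
    rw [Matrix.mulVec_mulVec, h, Matrix.one_mulVec]
  map_add' v w := by
    exact Matrix.mulVec_add _ _ _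

/-- The action `ψ_g(n) = (gᵗ)⁻¹ n` of `GL_d(F)` on the (multiplicatively written) additive
group `F^d`, as a homomorphism into its automorphism group. -/
noncomputable def transposeInvAction (d : ℕ) (F : Type*) [Field F] :
    GL (Fin d) F →* MulAut (Multiplicative (Fin d → F)) where
  toFun g := AddEquiv.toMultiplicative (transposeInvAddAut g)
  map_one' := by
    ext v
    simp [AddEquiv.toMultiplicative, transposeInvAddAut]
  map_mul' g h := by
    ext v
    simp [AddEquiv.toMultiplicative, transposeInvAddAut, Matrix.mulVec_mulVec,
      ← Matrix.transpose_mul, mul_inv_rev]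

/-- The action of `GL⁺_d(ℚ)` on `ℚ^d` by `ψ_g(n) = (gᵗ)⁻¹ n`. -/
noncomputable def glPosAction (d : ℕ) :
    (Matrix.GLPos (Fin d) ℚ) →* MulAut (Multiplicative (Fin d → ℚ)) :=
  (transposeInvAction d ℚ).comp (Matrix.GLPos (Fin d) ℚ).subtype

/-- The lattice `ℤ^d` inside `ℚ^d`. -/
def intLattice (d : ℕ) : AddSubgroup (Fin d → ℚ) :=
  AddSubgroup.pi Set.univ fun _ => (Int.castAddHom ℚ).range

/-- `ℤ^d` as a subgroup of the normal part of `Γ = ℚ^d ⋊ GL⁺_d(ℚ)`. -/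
noncomputable def intLatticeSubgroup (d : ℕ) :
    Subgroup (Multiplicative (Fin d → ℚ) ⋊[glPosAction d] (Matrix.GLPos (Fin d) ℚ)) :=
  (AddSubgroup.toSubgroup (intLattice d)).map
    (SemidirectProduct.inl :
      Multiplicative (Fin d → ℚ) →* Multiplicative (Fin d → ℚ) ⋊[glPosAction d] _)


section Aux

open SemidirectProduct Multiplicative

noncomputable def iotaZ (d : ℕ) (a : Fin d → ℤ) :
    Multiplicative (Fin d → ℚ) ⋊[glPosAction d] (Matrix.GLPos (Fin d) ℚ) :=
  SemidirectProduct.inl (Multiplicative.ofAdd fun i => (a i : ℚ))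

lemma inl_mem_intLatticeSubgroup_iff {d : ℕ} (w : Fin d → ℚ) :
    (SemidirectProduct.inl (Multiplicative.ofAdd w) :
      Multiplicative (Fin d → ℚ) ⋊[glPosAction d] (Matrix.GLPos (Fin d) ℚ)) ∈
      intLatticeSubgroup d ↔ ∀ i, ∃ k : ℤ, w i = k := by
  rw [intLatticeSubgroup, Subgroup.mem_map]
  constructor
  · rintro ⟨y, hy, hxy⟩
    have hy' : y = Multiplicative.ofAdd w := SemidirectProduct.inl_injective hxy
    subst hy'
    intro i
    obtain ⟨k, hk⟩ := hy i (Set.mem_univ i)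
    exact ⟨k, hk.symm⟩
  · intro h
    refine ⟨Multiplicative.ofAdd w, ?_, rfl⟩
    intro i _
    obtain ⟨k, hk⟩ := h i
    exact ⟨k, hk.symm⟩

lemma glPosAction_inv_apply {d : ℕ} (r : Matrix.GLPos (Fin d) ℚ) (w : Fin d → ℚ) :
    glPosAction d r⁻¹ (Multiplicative.ofAdd w) =
      Multiplicative.ofAdd ((((r : GL (Fin d) ℚ) : Matrix (Fin d) (Fin d) ℚ))ᵀ *ᵥ w) := by
  have hdet : IsUnit ((((r : GL (Fin d) ℚ)) : Matrix (Fin d) (Fin d) ℚ)).det :=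
    Matrix.isUnits_det_units (r : GL (Fin d) ℚ)
  simp [glPosAction, transposeInvAction, transposeInvAddAut, AddEquiv.toMultiplicative,
    AddEquiv.toMultiplicativeRight, MonoidHom.comp_apply, Matrix.nonsing_inv_nonsing_inv _ hdet]

lemma conj_inl_mem {d : ℕ}
    (γ : Multiplicative (Fin d → ℚ) ⋊[glPosAction d] (Matrix.GLPos (Fin d) ℚ))
    (w : Fin d → ℚ) :
    γ⁻¹ * SemidirectProduct.inl (Multiplicative.ofAdd w) * γ =
      SemidirectProduct.inl (Multiplicative.ofAdd
        ((((γ.right : GL (Fin d) ℚ) : Matrix (Fin d) (Fin d) ℚ))ᵀ *ᵥ w)) := by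
  ext
  · simp only [SemidirectProduct.mul_left, SemidirectProduct.inv_left,
      SemidirectProduct.inv_right, SemidirectProduct.left_inl, SemidirectProduct.right_inl,
      SemidirectProduct.mul_right, mul_one]
    rw [mul_comm ((glPosAction d γ.right⁻¹) γ.left⁻¹) _, mul_assoc, ← map_mul,
      inv_mul_cancel, map_one, mul_one, glPosAction_inv_apply]
  · simp

lemma coset_eq_of_mod {d : ℕ}
    (γ : Multiplicative (Fin d → ℚ) ⋊[glPosAction d] (Matrix.GLPos (Fin d) ℚ))
    (Nn : ℤ)
    (hN : ∀ i j : Fin d, ∃ k : ℤ,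
      (Nn : ℚ) * ((γ.right : GL (Fin d) ℚ) : Matrix (Fin d) (Fin d) ℚ) i j = k)
    (a b : Fin d → ℤ) (hab : ∀ j, ∃ c : ℤ, (b j : ℚ) - a j = Nn * c) :
    (QuotientGroup.mk (iotaZ d a * γ) : _ ⧸ intLatticeSubgroup d) =
      QuotientGroup.mk (iotaZ d b * γ) := by
  rw [QuotientGroup.eq]
  have h1 : (iotaZ d a)⁻¹ * iotaZ d b =
      SemidirectProduct.inl (Multiplicative.ofAdd fun j => (b j : ℚ) - a j) := by
    rw [iotaZ, iotaZ, ← map_inv, ← map_mul]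
    congr 1
    have : (Multiplicative.ofAdd fun i => (a i : ℚ))⁻¹ *
        Multiplicative.ofAdd (fun i => (b i : ℚ)) =
        Multiplicative.ofAdd ((fun i => -(a i : ℚ)) + fun i => (b i : ℚ)) := rfl
    rw [this]
    congr 1
    funext j
    simp [neg_add_eq_sub]
  have h2 : (iotaZ d a * γ)⁻¹ * (iotaZ d b * γ) =
      γ⁻¹ * ((iotaZ d a)⁻¹ * iotaZ d b) * γ := by group
  rw [h2, h1, conj_inl_mem, inl_mem_intLatticeSubgroup_iff]
  intro i
  choose c hc using hab
  choose K hK using hN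
  refine ⟨∑ j, K j i * c j, ?_⟩
  rw [Matrix.mulVec, dotProduct]
  push_cast
  refine Finset.sum_congr rfl fun j _ => ?_
  rw [Matrix.transpose_apply, hc j, ← mul_assoc, mul_comm _ (Nn : ℚ), hK j i]

end Aux


/-- `(ℚ^d ⋊ GL⁺_d(ℚ), ℤ^d)` is a Hecke pair: every double coset
`ℤ^d γ ℤ^d` is a finite union of left cosets, i.e. its image in `Γ/ℤ^d` is finite. -/
theorem glPos_int_lattice_hecke_pair (d : ℕ) (hd : 1 ≤ d) :
    ∀ γ : Multiplicative (Fin d → ℚ) ⋊[glPosAction d] (Matrix.GLPos (Fin d) ℚ),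
      (QuotientGroup.mk ''
          DoubleCoset.doubleCoset γ (intLatticeSubgroup d : Set _) (intLatticeSubgroup d : Set _) :
        Set (_ ⧸ intLatticeSubgroup d)).Finite := by
  intro γ
  classical
  set M : Matrix (Fin d) (Fin d) ℚ := ((γ.right : GL (Fin d) ℚ) : Matrix (Fin d) (Fin d) ℚ)
    with hM
  set Nn : ℤ := ∏ i : Fin d, ∏ j : Fin d, ((M i j).den : ℤ) with hNn
  have hNpos : 0 < Nn := Finset.prod_pos fun i _ => Finset.prod_pos fun j _ => by
    exact_mod_cast (M i j).pos
  have hden : ∀ i j : Fin d, ((M i j).den : ℤ) ∣ Nn := by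
    intro i j
    have h1 : ((M i j).den : ℤ) ∣ ∏ j' : Fin d, ((M i j').den : ℤ) :=
      Finset.dvd_prod_of_mem (fun j' => ((M i j').den : ℤ)) (Finset.mem_univ j)
    have h2 : (∏ j' : Fin d, ((M i j').den : ℤ)) ∣ Nn :=
      Finset.dvd_prod_of_mem (fun i' => ∏ j' : Fin d, ((M i' j').den : ℤ)) (Finset.mem_univ i)
    exact h1.trans h2
  have hN : ∀ i j : Fin d, ∃ k : ℤ, (Nn : ℚ) * M i j = k := by
    intro i j
    obtain ⟨e, he⟩ := hden i j
    refine ⟨e * (M i j).num, ?_⟩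
    have h1 : (Nn : ℚ) = ((M i j).den : ℚ) * (e : ℚ) := by exact_mod_cast he
    rw [h1, mul_comm (((M i j).den : ℚ)) (e : ℚ), mul_assoc, Rat.den_mul_eq_num]
    push_cast
    ring
  have hT : (Set.pi Set.univ fun _ : Fin d => Set.Ico (0 : ℤ) Nn).Finite :=
    Set.Finite.pi fun _ => Set.finite_Ico _ _
  apply Set.Finite.subset
    (hT.image fun a => (QuotientGroup.mk (iotaZ d a * γ) : _ ⧸ intLatticeSubgroup d))
  rintro q ⟨x, hx, rfl⟩
  obtain ⟨h₁, hh₁, h₂, hh₂, rfl⟩ := DoubleCoset.mem_doubleCoset.1 hx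
  simp only [SetLike.mem_coe, intLatticeSubgroup, Subgroup.mem_map] at hh₁
  obtain ⟨y, hy, rfl⟩ := hh₁
  choose a ha using fun i => hy i (Set.mem_univ i)
  have hya : y = Multiplicative.ofAdd fun i => (a i : ℚ) := by
    have : Multiplicative.toAdd y = fun i => (a i : ℚ) := by
      funext i; exact (ha i).symm
    rw [← this]; rfl
  have hy2 : SemidirectProduct.inl y = iotaZ d a := by rw [hya]; rfl
  set b : Fin d → ℤ := fun i => a i % Nn with hb
  have hbT : b ∈ Set.pi Set.univ fun _ : Fin d => Set.Ico (0 : ℤ) Nn := by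
    intro i _
    exact ⟨Int.emod_nonneg _ hNpos.ne', Int.emod_lt_of_pos _ hNpos⟩
  have hmod : ∀ j, ∃ c : ℤ, (b j : ℚ) - a j = Nn * c := by
    intro j
    refine ⟨-(a j / Nn), ?_⟩
    have : b j - a j = Nn * -(a j / Nn) := by
      rw [hb]; simp only [Int.emod_def]; ring
    exact_mod_cast congrArg (fun z : ℤ => (z : ℚ)) this
  refine ⟨b, hbT, ?_⟩
  calc (QuotientGroup.mk (iotaZ d b * γ) : _ ⧸ intLatticeSubgroup d)
      = QuotientGroup.mk (iotaZ d a * γ) := (coset_eq_of_mod γ Nn hN a b hmod).symm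
    _ = QuotientGroup.mk (iotaZ d a * γ * h₂) := (QuotientGroup.mk_mul_of_mem _ hh₂).symm
    _ = QuotientGroup.mk (SemidirectProduct.inl y * γ * h₂) := by rw [hy2]
end

section
/- Let K be a number field with ring of integers O and let d ≥ 1. Let G = GL_d(K) act on N = K^d by ψ_g(n) = (gᵗ)⁻¹ n, and let Γ = K^d ⋊ GL_d(K) be the semidirect product. Then (Γ, O^d) is a Hecke pair, i.e. every double coset O^d γ O^d in Γ is a finite union of left cosets γ' O^d, where O^d is viewed as a subgroup of the normal part K^d. -/
open scoped Pointwise Matrix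
open NumberField

/-- The lattice `O^d` inside `K^d`, where `O` is the ring of integers of a number field. -/
def intRingLattice (K : Type*) [Field K] [NumberField K] (d : ℕ) :
    AddSubgroup (Fin d → K) :=
  AddSubgroup.pi Set.univ fun _ => (algebraMap (𝓞 K) K).range.toAddSubgroup

/-- `O^d` as a subgroup of the normal part of `Γ = K^d ⋊ GL_d(K)`. -/
noncomputable def intRingLatticeSubgroup (K : Type*) [Field K] [NumberField K] (d : ℕ) :
    Subgroup (Multiplicative (Fin d → K) ⋊[transposeInvAction d K] GL (Fin d) K) :=
  (AddSubgroup.toSubgroup (intRingLattice K d)).map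
    (SemidirectProduct.inl :
      Multiplicative (Fin d → K) →*
        Multiplicative (Fin d → K) ⋊[transposeInvAction d K] GL (Fin d) K)

lemma conj_inl {N G : Type*} [CommGroup N] [Group G] {φ : G →* MulAut N}
    (z : N ⋊[φ] G) (n : N) :
    z⁻¹ * SemidirectProduct.inl n * z = SemidirectProduct.inl (φ z.right⁻¹ n) := by
  ext
  · simp only [SemidirectProduct.mul_left, SemidirectProduct.mul_right,
      SemidirectProduct.inv_left, SemidirectProduct.inv_right, SemidirectProduct.left_inl,
      SemidirectProduct.right_inl, mul_one, ← map_mul]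
    congr 1
    rw [mul_comm, mul_inv_cancel_left]
  · simp

/-- for a number field `K` with ring of integers `O`,
`(K^d ⋊ GL_d(K), O^d)` is a Hecke pair: every double coset `O^d γ O^d` is a finite union
of left cosets, i.e. its image in `Γ/O^d` is finite. -/
theorem gl_numberField_int_lattice_hecke_pair
    (K : Type*) [Field K] [NumberField K] (d : ℕ) (hd : 1 ≤ d) :
    ∀ γ : Multiplicative (Fin d → K) ⋊[transposeInvAction d K] GL (Fin d) K,
      (QuotientGroup.mk ''
          DoubleCoset.doubleCoset γ (intRingLatticeSubgroup K d : Set _)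
            (intRingLatticeSubgroup K d : Set _) :
        Set (_ ⧸ intRingLatticeSubgroup K d)).Finite := by
  intro γ
  classical
  obtain ⟨b, hb⟩ := IsLocalization.exist_integer_multiples_of_finite
    (nonZeroDivisors (𝓞 K))
    (fun p : Fin d × Fin d => ((↑γ.right : Matrix (Fin d) (Fin d) K)ᵀ p.1 p.2))
  choose e he using hb
  have hbne : (b : 𝓞 K) ≠ 0 := nonZeroDivisors.coe_ne_zero b
  haveI : Finite (𝓞 K ⧸ Ideal.span {(b : 𝓞 K)}) := by
    have := Ideal.finiteQuotientOfFreeOfNeBot (Ideal.span {(b : 𝓞 K)})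
      (by simpa [Ideal.span_singleton_eq_bot] using hbne)
    exact this
  have key : ∀ a a' : Fin d → 𝓞 K, (∀ i, a' i - a i ∈ Ideal.span {(b : 𝓞 K)}) →
      (QuotientGroup.mk (SemidirectProduct.inl
          (Multiplicative.ofAdd fun i => algebraMap (𝓞 K) K (a i)) * γ) :
        _ ⧸ intRingLatticeSubgroup K d) =
      QuotientGroup.mk (SemidirectProduct.inl
          (Multiplicative.ofAdd fun i => algebraMap (𝓞 K) K (a' i)) * γ) := by
    intro a a' h
    choose c hc using fun i => Ideal.mem_span_singleton.mp (h i)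
    rw [QuotientGroup.eq]
    have step : (SemidirectProduct.inl
          (Multiplicative.ofAdd fun i => algebraMap (𝓞 K) K (a i)) * γ)⁻¹ *
        (SemidirectProduct.inl
          (Multiplicative.ofAdd fun i => algebraMap (𝓞 K) K (a' i)) * γ)
        = γ⁻¹ * SemidirectProduct.inl
            ((Multiplicative.ofAdd fun i => algebraMap (𝓞 K) K (a i))⁻¹ *
              (Multiplicative.ofAdd fun i => algebraMap (𝓞 K) K (a' i))) * γ := by
      rw [map_mul, map_inv]
      group
    rw [step, conj_inl]
    refine ⟨_, ?_, rfl⟩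
    show Multiplicative.toAdd ((transposeInvAction d K) γ.right⁻¹
        ((Multiplicative.ofAdd fun i => algebraMap (𝓞 K) K (a i))⁻¹ *
          (Multiplicative.ofAdd fun i => algebraMap (𝓞 K) K (a' i)))) ∈ intRingLattice K d
    have h1 : Multiplicative.toAdd ((transposeInvAction d K) γ.right⁻¹
        ((Multiplicative.ofAdd fun i => algebraMap (𝓞 K) K (a i))⁻¹ *
          (Multiplicative.ofAdd fun i => algebraMap (𝓞 K) K (a' i))))
        = (↑γ.right : Matrix (Fin d) (Fin d) K)ᵀ *ᵥ
            (fun j => algebraMap (𝓞 K) K (a' j) - algebraMap (𝓞 K) K (a j)) := by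
      show (↑((γ.right⁻¹)⁻¹) : Matrix (Fin d) (Fin d) K)ᵀ *ᵥ
          (Multiplicative.toAdd ((Multiplicative.ofAdd fun i => algebraMap (𝓞 K) K (a i))⁻¹ *
            (Multiplicative.ofAdd fun i => algebraMap (𝓞 K) K (a' i)))) = _
      have hvec : Multiplicative.toAdd ((Multiplicative.ofAdd fun i =>
            algebraMap (𝓞 K) K (a i))⁻¹ *
            (Multiplicative.ofAdd fun i => algebraMap (𝓞 K) K (a' i)))
          = fun j => algebraMap (𝓞 K) K (a' j) - algebraMap (𝓞 K) K (a j) := by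
        funext j
        show -(algebraMap (𝓞 K) K (a j)) + algebraMap (𝓞 K) K (a' j) = _
        ring
      rw [inv_inv, hvec]
    rw [h1]
    refine (AddSubgroup.mem_pi _).mpr fun i _ => ?_
    refine ⟨∑ j, e (i, j) * c j, ?_⟩
    show algebraMap (𝓞 K) K (∑ j, e (i, j) * c j) = _
    have hv : ∀ j, algebraMap (𝓞 K) K (a' j) - algebraMap (𝓞 K) K (a j)
        = algebraMap (𝓞 K) K b * algebraMap (𝓞 K) K (c j) := by
      intro j
      rw [← map_mul, ← hc j, map_sub]
    simp only [Matrix.mulVec, dotProduct, map_sum, map_mul]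
    refine Finset.sum_congr rfl fun j _ => ?_
    show algebraMap (𝓞 K) K (e (i, j)) * algebraMap (𝓞 K) K (c j)
        = (↑γ.right : Matrix (Fin d) (Fin d) K)ᵀ i j *
          (algebraMap (𝓞 K) K (a' j) - algebraMap (𝓞 K) K (a j))
    rw [hv j, he (i, j), Algebra.smul_def]
    ring
  let hbar : (Fin d → 𝓞 K ⧸ Ideal.span {(b : 𝓞 K)}) →
      (Multiplicative (Fin d → K) ⋊[transposeInvAction d K] GL (Fin d) K) ⧸
        intRingLatticeSubgroup K d :=
    fun q => QuotientGroup.mk (SemidirectProduct.inl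
      (Multiplicative.ofAdd fun i => algebraMap (𝓞 K) K (q i).out) * γ)
  refine Set.Finite.subset (Set.finite_range hbar) ?_
  rintro x ⟨z, hz, rfl⟩
  obtain ⟨p, hp, q', hq', rfl⟩ := DoubleCoset.mem_doubleCoset.mp hz
  obtain ⟨s, hs, rfl⟩ := hp
  obtain ⟨t, ht, rfl⟩ := hq'
  have htmem : SemidirectProduct.inl t ∈ intRingLatticeSubgroup K d := ⟨t, ht, rfl⟩
  rw [QuotientGroup.mk_mul_of_mem _ htmem]
  have hs0 : Multiplicative.toAdd s ∈ intRingLattice K d := hs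
  have hs' : ∀ i, ∃ y : 𝓞 K, algebraMap (𝓞 K) K y = Multiplicative.toAdd s i := by
    intro i
    exact (AddSubgroup.mem_pi _).mp hs0 i (Set.mem_univ i)
  choose a ha using hs'
  have hseq : s = Multiplicative.ofAdd fun i => algebraMap (𝓞 K) K (a i) := by
    have h2 : Multiplicative.toAdd s = fun i => algebraMap (𝓞 K) K (a i) :=
      funext fun i => (ha i).symm
    exact congrArg Multiplicative.ofAdd h2
  have hout : ∀ i, a i -
      (Ideal.Quotient.mk (Ideal.span {(b : 𝓞 K)}) (a i)).out ∈ Ideal.span {(b : 𝓞 K)} := by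
    intro i
    refine Ideal.Quotient.eq.mp ?_
    exact (Quotient.out_eq _).symm
  refine ⟨fun i => Ideal.Quotient.mk _ (a i), ?_⟩
  show QuotientGroup.mk (SemidirectProduct.inl
      (Multiplicative.ofAdd fun i =>
        algebraMap (𝓞 K) K (Ideal.Quotient.mk (Ideal.span {(b : 𝓞 K)}) (a i)).out) * γ)
    = QuotientGroup.mk (SemidirectProduct.inl s * γ)
  rw [hseq]
  exact key _ _ hout
end

section
/- Let R be a commutative unital ring, M an R-module, and S ⊆ R a multiplicatively closed set of non-zero-divisors such that every s ∈ S acts injectively on M. Let S⁻¹M be the localization of M at S (into which M embeds), let G = S⁻¹S = {s/t : s, t ∈ S} be the subgroup of units of the localized ring S⁻¹R consisting of quotients of elements of S, acting on the additive group S⁻¹M by g·n = g⁻¹n, and let Γ = S⁻¹M ⋊ G. If for every s ∈ S the quotient s⁻¹M / M (equivalently M / sM) is finite, then (Γ, M) is a Hecke pair, where M is viewed as a subgroup of the normal part S⁻¹M. -/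
open scoped Pointwise

/-- The canonical isomorphism between additive automorphisms of `β` and multiplicative
automorphisms of `Multiplicative β`, as a group homomorphism. -/
def addAutToMulAut (β : Type*) [AddGroup β] : Multiplicative (AddAut β) →* MulAut (Multiplicative β) where
  toFun f := AddEquiv.toMultiplicative (Multiplicative.toAdd f)
  map_one' := rfl
  map_mul' _ _ := rfl

/-- The subgroup `S⁻¹S = {s/t : s, t ∈ S}` of the units of the localization `S⁻¹R`. -/
def quotientUnits {R : Type*} [CommRing R] (S : Submonoid R) :
    Subgroup (Localization S)ˣ where
  carrier := {g | ∃ s t : S, (g : Localization S) = Localization.mk (s : R) t}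
  one_mem' := ⟨1, 1, by rw [Units.val_one, Localization.mk_self]⟩
  mul_mem' := by
    rintro g₁ g₂ ⟨s₁, t₁, h₁⟩ ⟨s₂, t₂, h₂⟩
    exact ⟨s₁ * s₂, t₁ * t₂, by rw [Units.val_mul, h₁, h₂, Localization.mk_mul]; rfl⟩
  inv_mem' := by
    rintro g ⟨s, t, hg⟩
    refine ⟨t, s, ?_⟩
    have h1 : (g : Localization S) * Localization.mk (t : R) s = 1 := by
      rw [hg, Localization.mk_mul, mul_comm (s : R) (t : R), ← Submonoid.coe_mul]
      exact Localization.mk_self (t * s)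
    calc (↑g⁻¹ : Localization S)
        = ↑g⁻¹ * ((g : Localization S) * Localization.mk (t : R) s) := by rw [h1, mul_one]
      _ = Localization.mk (t : R) s := by rw [← mul_assoc, Units.inv_mul, one_mul]

/-- The action `g · n = g⁻¹ n` of the group `G = S⁻¹S` of quotients on the (multiplicatively
written) additive group of the localized module `S⁻¹M`. -/
noncomputable def quotientUnitsAction {R : Type*} [CommRing R] (S : Submonoid R)
    (M : Type*) [AddCommGroup M] [Module R M] :
    quotientUnits S →* MulAut (Multiplicative (LocalizedModule S M)) :=
  ((addAutToMulAut (LocalizedModule S M)).comp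
      ((DistribMulAction.toAddAut (Localization S)ˣ (LocalizedModule S M)).comp
        invMonoidHom)).comp (quotientUnits S).subtype

/-- `M` as a subgroup of the normal part `S⁻¹M` of `Γ = S⁻¹M ⋊ S⁻¹S`. -/
noncomputable def moduleSubgroup {R : Type*} [CommRing R] (S : Submonoid R)
    (M : Type*) [AddCommGroup M] [Module R M] :
    Subgroup (Multiplicative (LocalizedModule S M) ⋊[quotientUnitsAction S M] quotientUnits S) :=
  (AddSubgroup.toSubgroup (LocalizedModule.mkLinearMap S M).toAddMonoidHom.range).map
    (SemidirectProduct.inl :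
      Multiplicative (LocalizedModule S M) →*
        Multiplicative (LocalizedModule S M) ⋊[quotientUnitsAction S M] quotientUnits S)

/-- for a commutative ring `R`, an `R`-module `M`, and a multiplicative set
`S ⊆ R` of non-zero-divisors acting injectively on `M`, with `M/sM` finite for every
`s ∈ S`, the pair `(S⁻¹M ⋊ S⁻¹S, M)` is a Hecke pair. -/
theorem localization_module_hecke_pair
    {R : Type*} [CommRing R] (S : Submonoid R)
    (M : Type*) [AddCommGroup M] [Module R M]
    (hS : S ≤ nonZeroDivisors R)
    (hinj : ∀ s : S, Function.Injective fun m : M => (s : R) • m)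
    (hfin : ∀ s : S, Finite (M ⧸ (DistribMulAction.toAddMonoidHom M ((s : R))).range)) :
    ∀ γ : Multiplicative (LocalizedModule S M) ⋊[quotientUnitsAction S M] quotientUnits S,
      (QuotientGroup.mk ''
          DoubleCoset.doubleCoset γ (moduleSubgroup S M : Set _) (moduleSubgroup S M : Set _) :
        Set (_ ⧸ moduleSubgroup S M)).Finite := by
  intro γ
  obtain ⟨s, t, hg⟩ := γ.right.2
  have hact : ∀ (g : quotientUnits S) (x : LocalizedModule S M),
      (quotientUnitsAction S M g) (Multiplicative.ofAdd x)
        = Multiplicative.ofAdd ((((g : (Localization S)ˣ)⁻¹ : (Localization S)ˣ) :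
            Localization S) • x) := fun _ _ => rfl
  have key : ∀ u v : Multiplicative (LocalizedModule S M),
      (SemidirectProduct.inl u * γ)⁻¹ * (SemidirectProduct.inl v * γ)
        = SemidirectProduct.inl ((quotientUnitsAction S M γ.right⁻¹) (u⁻¹ * v)) := by
    intro u v
    ext
    · simp [mul_comm, mul_left_comm, mul_assoc]
    · simp
  -- the action of γ.right on mk ((t:R) • z) 1 lands in M
  have hφ : ∀ z : M,
      (quotientUnitsAction S M γ.right⁻¹)
          (Multiplicative.ofAdd (LocalizedModule.mk ((t : R) • z) (1 : S)))
        = Multiplicative.ofAdd (LocalizedModule.mk ((s : R) • z) (1 : S)) := by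
    intro z
    rw [hact]
    congr 1
    have hcoe : ((((γ.right⁻¹ : quotientUnits S) : (Localization S)ˣ)⁻¹ : (Localization S)ˣ) :
        Localization S) = ((γ.right : (Localization S)ˣ) : Localization S) := by
      simp
    rw [hcoe, hg, LocalizedModule.mk_smul_mk, mul_one]
    calc LocalizedModule.mk ((s : R) • (t : R) • z) t
        = LocalizedModule.mk (t • ((s : R) • z)) t := by rw [smul_comm]; rfl
      _ = LocalizedModule.mk ((s : R) • z) 1 := LocalizedModule.mk_cancel t _
  have := hfin t
  let F : M → ((Multiplicative (LocalizedModule S M) ⋊[quotientUnitsAction S M] quotientUnits S)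
      ⧸ moduleSubgroup S M) := fun m =>
    QuotientGroup.mk (SemidirectProduct.inl
      (Multiplicative.ofAdd (LocalizedModule.mk m (1 : S))) * γ)
  have wd : ∀ m m' : M,
      (QuotientAddGroup.leftRel (DistribMulAction.toAddMonoidHom M ((t : S) : R)).range) m m' →
        F m = F m' := by
    intro m m' hmm
    obtain ⟨x, hx⟩ := QuotientAddGroup.leftRel_apply.mp hmm
    have hx' : (t : R) • x = -m + m' := hx
    refine (QuotientGroup.eq).mpr ?_
    rw [key]
    have huv : (Multiplicative.ofAdd (LocalizedModule.mk m (1 : S)))⁻¹ *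
        Multiplicative.ofAdd (LocalizedModule.mk m' (1 : S))
          = Multiplicative.ofAdd (LocalizedModule.mk ((t : R) • x) (1 : S)) := by
      rw [hx']
      have : (LocalizedModule.mk (-m + m') (1 : S) : LocalizedModule S M)
          = -LocalizedModule.mk m 1 + LocalizedModule.mk m' 1 := by
        rw [show ∀ a : M, (LocalizedModule.mk a (1:S) : LocalizedModule S M)
            = LocalizedModule.mkLinearMap S M a from fun _ => rfl, map_add, map_neg]
        rfl
      rw [this]
      rfl
    rw [huv, hφ]
    exact Subgroup.mem_map.mpr ⟨_, ⟨(s : R) • x, rfl⟩, rfl⟩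
  let Fbar : (M ⧸ (DistribMulAction.toAddMonoidHom M ((t : S) : R)).range) →
      ((Multiplicative (LocalizedModule S M) ⋊[quotientUnitsAction S M] quotientUnits S)
        ⧸ moduleSubgroup S M) := Quotient.lift F wd
  refine Set.Finite.subset (Set.finite_range Fbar) ?_
  rintro _ ⟨d, hd, rfl⟩
  obtain ⟨x, hx, y, hy, rfl⟩ := DoubleCoset.mem_doubleCoset.mp hd
  obtain ⟨u, hu, rfl⟩ := Subgroup.mem_map.mp hx
  obtain ⟨m, hm⟩ := hu
  refine ⟨QuotientAddGroup.mk m, ?_⟩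
  have h1 : Fbar (QuotientAddGroup.mk m) = F m := rfl
  rw [h1]
  have hum : u = Multiplicative.ofAdd (LocalizedModule.mk m (1 : S)) := by
    have : Multiplicative.toAdd u = LocalizedModule.mk m 1 := hm.symm
    exact this ▸ rfl
  show F m = QuotientGroup.mk (SemidirectProduct.inl u * γ * y)
  refine (QuotientGroup.eq).mpr ?_
  rw [hum]
  have : (SemidirectProduct.inl (Multiplicative.ofAdd (LocalizedModule.mk m (1 : S))) * γ)⁻¹ *
      (SemidirectProduct.inl (Multiplicative.ofAdd (LocalizedModule.mk m (1 : S))) * γ * y) = y := by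
    group
  rw [this]
  exact hy
end

section
/- Let K be a quadratic imaginary number field (a number field of degree 2 over ℚ with no real embeddings), with ring of integers O and (finite) unit group O*. Let N = K ⋊ O* be the semidirect product for the multiplication action of O* on the additive group K, and let Γ₀ = O ⋊ O* ⊆ N. Then (N, Γ₀) is a Hecke pair; more precisely, each double coset Γ₀(y,u)Γ₀ with (y,u) ∈ N equals (yO* + O) × O* and is the union of at most |O*| right cosets of Γ₀. -/
open NumberField

/-- The multiplication action of the unit group `O*` of the ring of integers of `K` on the
(multiplicatively written) additive group of `K`. -/
noncomputable def intUnitsAction (K : Type*) [Field K] [NumberField K] :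
    (𝓞 K)ˣ →* MulAut (Multiplicative K) :=
  ((addAutToMulAut K).comp (DistribMulAction.toAddAut Kˣ K)).comp
    (Units.map (algebraMap (𝓞 K) K).toMonoidHom)

/-- The subgroup `Γ₀ = O ⋊ O*` of `N = K ⋊ O*`. -/
noncomputable def intSemidirectSubgroup (K : Type*) [Field K] [NumberField K] :
    Subgroup (Multiplicative K ⋊[intUnitsAction K] (𝓞 K)ˣ) where
  carrier := {γ | Multiplicative.toAdd γ.left ∈ (algebraMap (𝓞 K) K).range}
  one_mem' := by
    show Multiplicative.toAdd
        (1 : Multiplicative K ⋊[intUnitsAction K] (𝓞 K)ˣ).left ∈ (algebraMap (𝓞 K) K).range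
    rw [SemidirectProduct.one_left]
    exact ⟨0, by simp⟩
  mul_mem' := by
    rintro γ δ hγ hδ
    show Multiplicative.toAdd (γ * δ).left ∈ (algebraMap (𝓞 K) K).range
    rw [SemidirectProduct.mul_left]
    have : Multiplicative.toAdd (γ.left * (intUnitsAction K γ.right) δ.left)
        = Multiplicative.toAdd γ.left
            + algebraMap (𝓞 K) K ↑γ.right * Multiplicative.toAdd δ.left := rfl
    rw [this]
    exact add_mem hγ (mul_mem ⟨↑γ.right, rfl⟩ hδ)
  inv_mem' := by
    rintro γ hγ
    show Multiplicative.toAdd γ⁻¹.left ∈ (algebraMap (𝓞 K) K).range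
    rw [SemidirectProduct.inv_left]
    have : Multiplicative.toAdd ((intUnitsAction K γ.right⁻¹) γ.left⁻¹)
        = algebraMap (𝓞 K) K ↑γ.right⁻¹ * -Multiplicative.toAdd γ.left := rfl
    rw [this]
    exact mul_mem ⟨↑γ.right⁻¹, rfl⟩ (neg_mem hγ)

section Aux

variable {K : Type*} [Field K] [NumberField K]

lemma mem_intSemidirectSubgroup_iff (δ : Multiplicative K ⋊[intUnitsAction K] (𝓞 K)ˣ) :
    δ ∈ intSemidirectSubgroup K ↔
      ∃ a : 𝓞 K, algebraMap (𝓞 K) K a = Multiplicative.toAdd δ.left :=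
  Iff.rfl

lemma toAdd_mul_left' (x y : Multiplicative K ⋊[intUnitsAction K] (𝓞 K)ˣ) :
    Multiplicative.toAdd (x * y).left
      = Multiplicative.toAdd x.left
        + algebraMap (𝓞 K) K ↑x.right * Multiplicative.toAdd y.left := rfl

lemma toAdd_inv_left' (x : Multiplicative K ⋊[intUnitsAction K] (𝓞 K)ˣ) :
    Multiplicative.toAdd (x⁻¹).left
      = algebraMap (𝓞 K) K ↑x.right⁻¹ * (- Multiplicative.toAdd x.left) := rfl

lemma toAdd_intUnitsAction (v : (𝓞 K)ˣ) (g : Multiplicative K) :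
    Multiplicative.toAdd ((intUnitsAction K v) g)
      = algebraMap (𝓞 K) K ↑v * Multiplicative.toAdd g := rfl

lemma aux_unit_mul (v w : (𝓞 K)ˣ) :
    algebraMap (𝓞 K) K ↑v * algebraMap (𝓞 K) K ↑w = algebraMap (𝓞 K) K ↑(v * w) := by
  rw [← map_mul, ← Units.val_mul]

lemma finite_units_of_quadratic_imaginary (hdeg : Module.finrank ℚ K = 2)
    (himag : IsEmpty (K →+* ℝ)) : Finite (𝓞 K)ˣ := by
  have hre : NumberField.InfinitePlace.nrRealPlaces K = 0 := by
    have : IsEmpty {w : NumberField.InfinitePlace K // w.IsReal} :=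
      ⟨fun w => himag.false (NumberField.InfinitePlace.embedding_of_isReal w.2)⟩
    classical
    simp only [NumberField.InfinitePlace.nrRealPlaces]
    exact Fintype.card_eq_zero
  have h2 := NumberField.InfinitePlace.card_add_two_mul_card_eq_rank K
  rw [hdeg, hre] at h2
  have hrank : NumberField.Units.rank K = 0 := by
    unfold NumberField.Units.rank
    rw [NumberField.InfinitePlace.card_eq_nrRealPlaces_add_nrComplexPlaces, hre]
    omega
  refine Finite.of_surjective
    (fun ζ : NumberField.Units.torsion K => (ζ : (𝓞 K)ˣ)) (fun x => ?_)
  obtain ⟨⟨ζ, e⟩, hx, -⟩ := NumberField.Units.exist_unique_eq_mul_prod K x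
  have : IsEmpty (Fin (NumberField.Units.rank K)) := by rw [hrank]; infer_instance
  rw [Finset.univ_eq_empty, Finset.prod_empty, mul_one] at hx
  exact ⟨ζ, hx.symm⟩

end Aux

/-- for a quadratic imaginary number field `K` with ring of integers `O` and
unit group `O*`, `(K ⋊ O*, O ⋊ O*)` is a Hecke pair; more precisely, each double coset
`Γ₀(y,u)Γ₀` equals `(yO* + O) × O*` and is the union of at most `|O*|` right cosets. -/
theorem quadratic_imaginary_semidirect_hecke_pair
    (K : Type*) [Field K] [NumberField K]
    (hdeg : Module.finrank ℚ K = 2) (himag : IsEmpty (K →+* ℝ)) :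
    (∀ γ : Multiplicative K ⋊[intUnitsAction K] (𝓞 K)ˣ,
      (QuotientGroup.mk ''
          DoubleCoset.doubleCoset γ (intSemidirectSubgroup K : Set _) (intSemidirectSubgroup K : Set _) :
        Set (_ ⧸ intSemidirectSubgroup K)).Finite) ∧
    ∀ (y : K) (u : (𝓞 K)ˣ),
      DoubleCoset.doubleCoset (⟨Multiplicative.ofAdd y, u⟩ : Multiplicative K ⋊[intUnitsAction K] (𝓞 K)ˣ)
          (intSemidirectSubgroup K : Set _) (intSemidirectSubgroup K : Set _)
        = {δ : Multiplicative K ⋊[intUnitsAction K] (𝓞 K)ˣ | ∃ (v : (𝓞 K)ˣ) (a : 𝓞 K),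
            Multiplicative.toAdd δ.left
              = y * algebraMap (𝓞 K) K ↑v + algebraMap (𝓞 K) K a} ∧
      (Quotient.mk (QuotientGroup.rightRel (intSemidirectSubgroup K)) ''
          DoubleCoset.doubleCoset
            (⟨Multiplicative.ofAdd y, u⟩ : Multiplicative K ⋊[intUnitsAction K] (𝓞 K)ˣ)
            (intSemidirectSubgroup K : Set _) (intSemidirectSubgroup K : Set _)).Finite ∧
      Nat.card
          (Quotient.mk (QuotientGroup.rightRel (intSemidirectSubgroup K)) ''
            DoubleCoset.doubleCoset
              (⟨Multiplicative.ofAdd y, u⟩ : Multiplicative K ⋊[intUnitsAction K] (𝓞 K)ˣ)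
              (intSemidirectSubgroup K : Set _) (intSemidirectSubgroup K : Set _))
        ≤ Nat.card (𝓞 K)ˣ := by
  haveI hfin : Finite (𝓞 K)ˣ := finite_units_of_quadratic_imaginary hdeg himag
  constructor
  · -- finiteness of left-coset image for every γ
    intro γ
    apply Set.Finite.subset (Set.finite_range (fun v : (𝓞 K)ˣ =>
      (QuotientGroup.mk (⟨(intUnitsAction K v) γ.left, 1⟩ :
        Multiplicative K ⋊[intUnitsAction K] (𝓞 K)ˣ) : _ ⧸ intSemidirectSubgroup K)))
    rintro q ⟨x, hx, rfl⟩
    rw [DoubleCoset.mem_doubleCoset] at hx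
    obtain ⟨m, hm, n, hn, rfl⟩ := hx
    obtain ⟨a, ha⟩ := (mem_intSemidirectSubgroup_iff m).mp hm
    obtain ⟨b, hb⟩ := (mem_intSemidirectSubgroup_iff n).mp hn
    refine ⟨m.right, ?_⟩
    refine QuotientGroup.eq.mpr ?_
    refine (mem_intSemidirectSubgroup_iff _).mpr ⟨a + ↑(m.right * γ.right) * b, ?_⟩
    simp only [toAdd_mul_left', toAdd_inv_left', toAdd_intUnitsAction,
      SemidirectProduct.mul_right, SemidirectProduct.inv_right, inv_one, Units.val_one,
      map_one, one_mul]
    rw [← ha, ← hb]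
    simp only [Units.val_mul, map_add, map_mul]
    ring
  · intro y u
    have hdoset :
        DoubleCoset.doubleCoset (⟨Multiplicative.ofAdd y, u⟩ : Multiplicative K ⋊[intUnitsAction K] (𝓞 K)ˣ)
            (intSemidirectSubgroup K : Set _) (intSemidirectSubgroup K : Set _)
          = {δ : Multiplicative K ⋊[intUnitsAction K] (𝓞 K)ˣ | ∃ (v : (𝓞 K)ˣ) (a : 𝓞 K),
              Multiplicative.toAdd δ.left
                = y * algebraMap (𝓞 K) K ↑v + algebraMap (𝓞 K) K a} := by
      ext δ
      rw [DoubleCoset.mem_doubleCoset]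
      constructor
      · rintro ⟨m, hm, n, hn, rfl⟩
        obtain ⟨a, ha⟩ := (mem_intSemidirectSubgroup_iff m).mp hm
        obtain ⟨b, hb⟩ := (mem_intSemidirectSubgroup_iff n).mp hn
        refine ⟨m.right, a + ↑(m.right * u) * b, ?_⟩
        simp only [toAdd_mul_left', SemidirectProduct.mul_right, toAdd_ofAdd]
        rw [← ha, ← hb]
        simp only [Units.val_mul, map_add, map_mul]
        ring
      · rintro ⟨v, a, h⟩
        refine ⟨⟨Multiplicative.ofAdd (algebraMap (𝓞 K) K a), v⟩,
          (mem_intSemidirectSubgroup_iff _).mpr ⟨a, by simp⟩,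
          ⟨1, (v * u)⁻¹ * δ.right⟩,
          (mem_intSemidirectSubgroup_iff _).mpr ⟨0, by simp⟩, ?_⟩
        refine SemidirectProduct.ext ?_ ?_
        · apply Multiplicative.toAdd.injective
          rw [h]
          simp only [toAdd_mul_left']
          show _ = (Multiplicative.toAdd (Multiplicative.ofAdd (algebraMap (𝓞 K) K a))
              + algebraMap (𝓞 K) K ↑v * Multiplicative.toAdd (Multiplicative.ofAdd y))
            + algebraMap (𝓞 K) K ↑(v * u) * Multiplicative.toAdd (1 : Multiplicative K)
          rw [toAdd_ofAdd, toAdd_ofAdd, toAdd_one]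
          ring
        · show δ.right = v * u * ((v * u)⁻¹ * δ.right)
          rw [mul_inv_cancel_left]
    refine ⟨hdoset, ?_, ?_⟩
    all_goals {
      have hsub : (Quotient.mk (QuotientGroup.rightRel (intSemidirectSubgroup K)) ''
          DoubleCoset.doubleCoset
            (⟨Multiplicative.ofAdd y, u⟩ : Multiplicative K ⋊[intUnitsAction K] (𝓞 K)ˣ)
            (intSemidirectSubgroup K : Set _) (intSemidirectSubgroup K : Set _))
          ⊆ Set.range (fun t : (𝓞 K)ˣ =>
              Quotient.mk (QuotientGroup.rightRel (intSemidirectSubgroup K))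
                (⟨Multiplicative.ofAdd y, t⟩ :
                  Multiplicative K ⋊[intUnitsAction K] (𝓞 K)ˣ)) := by
        rintro q ⟨x, hx, rfl⟩
        rw [hdoset] at hx
        obtain ⟨v, a, h⟩ := hx
        refine ⟨x.right * v⁻¹, ?_⟩
        refine Quotient.sound (QuotientGroup.rightRel_apply.mpr ?_)
        refine (mem_intSemidirectSubgroup_iff _).mpr ⟨a, ?_⟩
        have hunit : x.right * (x.right * v⁻¹)⁻¹ = v := by
          rw [mul_inv, inv_inv, mul_inv_cancel_left]
        have key : algebraMap (𝓞 K) K ↑x.right * algebraMap (𝓞 K) K ↑(x.right * v⁻¹)⁻¹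
            = algebraMap (𝓞 K) K ↑v := by
          rw [aux_unit_mul, hunit]
        simp only [toAdd_mul_left', toAdd_inv_left', SemidirectProduct.inv_right]
        rw [h]
        show algebraMap (𝓞 K) K a = _ + algebraMap (𝓞 K) K ↑x.right *
          (algebraMap (𝓞 K) K ↑(x.right * v⁻¹)⁻¹
            * (- Multiplicative.toAdd (Multiplicative.ofAdd y)))
        rw [toAdd_ofAdd]
        linear_combination y * key
      first
      | exact Set.Finite.subset (Set.finite_range _) hsub
      | exact le_trans (Nat.card_mono (Set.finite_range _) hsub)
          (Nat.card_le_card_of_surjective _ Set.rangeFactorization_surjective)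
    }
end

section
/- Let K be a quadratic imaginary number field (a number field of degree 2 over ℚ with no real embeddings), with ring of integers O and unit group O*. Let Γ = K ⋊ K* be the semidirect product for the multiplication action of the multiplicative group K* on the additive group K, and let Γ₀ = O ⋊ O* ⊆ Γ. Then (Γ, Γ₀) is a Hecke pair, i.e. every double coset Γ₀γΓ₀ is a finite union of left cosets γ'Γ₀. -/
open NumberField

/-- The multiplication action of `K*` on the (multiplicatively written) additive group
of `K`. -/
def fieldUnitsAction (K : Type*) [Field K] :
    Kˣ →* MulAut (Multiplicative K) :=
  (addAutToMulAut K).comp (DistribMulAction.toAddAut Kˣ K)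

/-- The subgroup `Γ₀ = O ⋊ O*` of `Γ = K ⋊ K*`. -/
noncomputable def intFullSubgroup (K : Type*) [Field K] [NumberField K] :
    Subgroup (Multiplicative K ⋊[fieldUnitsAction K] Kˣ) where
  carrier := {γ | Multiplicative.toAdd γ.left ∈ (algebraMap (𝓞 K) K).range ∧
    γ.right ∈ (Units.map (algebraMap (𝓞 K) K).toMonoidHom).range}
  one_mem' := by
    constructor
    · show Multiplicative.toAdd
          (1 : Multiplicative K ⋊[fieldUnitsAction K] Kˣ).left ∈ (algebraMap (𝓞 K) K).range
      rw [SemidirectProduct.one_left]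
      exact ⟨0, by simp⟩
    · show (1 : Multiplicative K ⋊[fieldUnitsAction K] Kˣ).right ∈ _
      rw [SemidirectProduct.one_right]
      exact one_mem _
  mul_mem' := by
    rintro γ δ ⟨hγl, w, hw⟩ ⟨hδl, hδr⟩
    constructor
    · show Multiplicative.toAdd (γ * δ).left ∈ (algebraMap (𝓞 K) K).range
      rw [SemidirectProduct.mul_left]
      have : Multiplicative.toAdd (γ.left * (fieldUnitsAction K γ.right) δ.left)
          = Multiplicative.toAdd γ.left + ↑γ.right * Multiplicative.toAdd δ.left := rfl
      rw [this]
      refine add_mem hγl (mul_mem ⟨↑w, ?_⟩ hδl)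
      rw [← hw]; rfl
    · show (γ * δ).right ∈ _
      rw [SemidirectProduct.mul_right]
      exact mul_mem ⟨w, hw⟩ hδr
  inv_mem' := by
    rintro γ ⟨hγl, w, hw⟩
    constructor
    · show Multiplicative.toAdd γ⁻¹.left ∈ (algebraMap (𝓞 K) K).range
      rw [SemidirectProduct.inv_left]
      have : Multiplicative.toAdd ((fieldUnitsAction K γ.right⁻¹) γ.left⁻¹)
          = ↑γ.right⁻¹ * -Multiplicative.toAdd γ.left := rfl
      rw [this]
      refine mul_mem ⟨↑w⁻¹, ?_⟩ (neg_mem hγl)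
      rw [← hw]; rfl
    · show γ⁻¹.right ∈ _
      rw [SemidirectProduct.inv_right]
      exact inv_mem ⟨w, hw⟩
  

/-- For a quadratic imaginary number field, the unit group of the ring of integers
is finite. -/
lemma units_finite_of_quadratic_imaginary (K : Type*) [Field K] [NumberField K]
    (hdeg : Module.finrank ℚ K = 2) (himag : IsEmpty (K →+* ℝ)) :
    Finite ((𝓞 K)ˣ) := by
  have h0 : NumberField.InfinitePlace.nrRealPlaces K = 0 := by
    simp only [NumberField.InfinitePlace.nrRealPlaces, Fintype.card_eq_zero_iff]
    exact ⟨fun w => himag.elim (NumberField.InfinitePlace.embedding_of_isReal w.2)⟩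
  have h2 : NumberField.InfinitePlace.nrComplexPlaces K = 1 := by
    have hh := NumberField.InfinitePlace.card_add_two_mul_card_eq_rank K
    rw [hdeg, h0] at hh
    omega
  have hcard : Fintype.card (NumberField.InfinitePlace K) = 1 := by
    rw [NumberField.InfinitePlace.card_eq_nrRealPlaces_add_nrComplexPlaces, h0, h2]
  have hrank : NumberField.Units.rank K = 0 := by
    rw [NumberField.Units.rank, hcard]
  haveI : IsEmpty (Fin (NumberField.Units.rank K)) := by rw [hrank]; infer_instance
  haveI : Subsingleton (Fin (NumberField.Units.rank K) →₀ ℤ) :=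
    ⟨fun f g => Finsupp.ext fun i => isEmptyElim i⟩
  letI := AddCommGroup.toIntModule (Additive ((𝓞 K)ˣ ⧸ NumberField.Units.torsion K))
  haveI : Subsingleton (Additive ((𝓞 K)ˣ ⧸ NumberField.Units.torsion K)) :=
    (NumberField.Units.basisModTorsion K).repr.toEquiv.subsingleton
  haveI : Subsingleton ((𝓞 K)ˣ ⧸ NumberField.Units.torsion K) :=
    Additive.ofMul.subsingleton
  haveI : Finite ((𝓞 K)ˣ ⧸ NumberField.Units.torsion K) := Finite.of_subsingleton
  exact Finite.of_equiv _
    (Subgroup.groupEquivQuotientProdSubgroup (s := NumberField.Units.torsion K)).symm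

/-- for a quadratic imaginary number field `K` with ring of integers `O` and
unit group `O*`, `(K ⋊ K*, O ⋊ O*)` is a Hecke pair: every double coset `Γ₀γΓ₀` is a finite
union of left cosets, i.e. its image in `Γ/Γ₀` is finite. -/
theorem quadratic_imaginary_full_hecke_pair
    (K : Type*) [Field K] [NumberField K]
    (hdeg : Module.finrank ℚ K = 2) (himag : IsEmpty (K →+* ℝ)) :
    ∀ γ : Multiplicative K ⋊[fieldUnitsAction K] Kˣ,
      (QuotientGroup.mk ''
          DoubleCoset.doubleCoset γ (intFullSubgroup K : Set _) (intFullSubgroup K : Set _) :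
        Set (_ ⧸ intFullSubgroup K)).Finite := by
  classical
  haveI hUfin : Finite ((𝓞 K)ˣ) := units_finite_of_quadratic_imaginary K hdeg himag
  intro γ
  set b : K := Multiplicative.toAdd γ.left with hb
  set a : Kˣ := γ.right with ha
  -- find a common denominator for `a`
  obtain ⟨⟨d, hd⟩, c, hc⟩ :=
    IsLocalization.exists_integer_multiple' (nonZeroDivisors (𝓞 K)) (a : K)
  have hdd : ((⟨d, hd⟩ : nonZeroDivisors (𝓞 K)) : 𝓞 K) = d := rfl
  rw [hdd] at hc
  -- hc : algebraMap c = ↑a * algebraMap d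
  have hdne : (d : 𝓞 K) ≠ 0 := nonZeroDivisors.ne_zero hd
  have hcne : c ≠ 0 := by
    intro h
    apply hdne
    have hinj := NumberField.RingOfIntegers.coe_injective (K := K)
    apply hinj
    have : (algebraMap (𝓞 K) K) c = 0 := by rw [h, map_zero]
    rw [hc] at this
    have := (mul_eq_zero.mp this).resolve_left (Units.ne_zero a)
    simpa using this
  set I : Ideal (𝓞 K) := Ideal.span {c} with hI
  have hIne : I ≠ ⊥ := by
    rw [hI, Ne, Ideal.span_singleton_eq_bot]
    exact hcne
  haveI : Finite (𝓞 K ⧸ I) := Ideal.finiteQuotientOfFreeOfNeBot I hIne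
  -- the basic coset function
  set f₀ : (𝓞 K)ˣ × 𝓞 K → (Multiplicative K ⋊[fieldUnitsAction K] Kˣ) ⧸ (intFullSubgroup K) := fun p =>
    QuotientGroup.mk ⟨Multiplicative.ofAdd
      (algebraMap (𝓞 K) K p.2 + algebraMap (𝓞 K) K (p.1 : 𝓞 K) * b), a⟩ with hf₀
  -- right translation invariance
  have key : ∀ (y : K) (t : 𝓞 K),
      (QuotientGroup.mk (s := (intFullSubgroup K)) ⟨Multiplicative.ofAdd (y + (a : K) * algebraMap (𝓞 K) K t), a⟩
        : (Multiplicative K ⋊[fieldUnitsAction K] Kˣ) ⧸ (intFullSubgroup K)) = QuotientGroup.mk ⟨Multiplicative.ofAdd y, a⟩ := by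
    intro y t
    have hmem : (⟨Multiplicative.ofAdd (algebraMap (𝓞 K) K t), 1⟩ : (Multiplicative K ⋊[fieldUnitsAction K] Kˣ)) ∈ (intFullSubgroup K) := by
      refine ⟨⟨t, rfl⟩, ?_⟩
      exact one_mem _
    have heq : (⟨Multiplicative.ofAdd (y + (a : K) * algebraMap (𝓞 K) K t), a⟩ : (Multiplicative K ⋊[fieldUnitsAction K] Kˣ))
        = (⟨Multiplicative.ofAdd y, a⟩ : (Multiplicative K ⋊[fieldUnitsAction K] Kˣ)) * ⟨Multiplicative.ofAdd (algebraMap (𝓞 K) K t), 1⟩ := by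
      refine SemidirectProduct.ext ?_ ?_
      · show Multiplicative.ofAdd (y + (a : K) * algebraMap (𝓞 K) K t)
          = Multiplicative.ofAdd y * (fieldUnitsAction K a) (Multiplicative.ofAdd (algebraMap (𝓞 K) K t))
        rfl
      · show a = a * 1
        rw [mul_one]
    rw [heq, QuotientGroup.mk_mul_of_mem _ hmem]
  -- well definedness modulo I
  have hwd : ∀ (u : (𝓞 K)ˣ) (m m' : 𝓞 K), m - m' ∈ I → f₀ (u, m) = f₀ (u, m') := by
    intro u m m' hmm
    rw [hI, Ideal.mem_span_singleton] at hmm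
    obtain ⟨n, hn⟩ := hmm
    have hm : (algebraMap (𝓞 K) K) m
        = (algebraMap (𝓞 K) K) m' + (a : K) * (algebraMap (𝓞 K) K) (d * n) := by
      have h1 : (algebraMap (𝓞 K) K) m - (algebraMap (𝓞 K) K) m'
          = (a : K) * ((algebraMap (𝓞 K) K) d * (algebraMap (𝓞 K) K) n) := by
        rw [← map_sub, hn, map_mul, hc]; ring
      rw [map_mul]
      linear_combination h1
    rw [hf₀]
    simp only
    rw [hm]
    rw [show (algebraMap (𝓞 K) K) m' + (a : K) * (algebraMap (𝓞 K) K) (d * n)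
        + algebraMap (𝓞 K) K (u : 𝓞 K) * b
        = ((algebraMap (𝓞 K) K) m' + algebraMap (𝓞 K) K (u : 𝓞 K) * b)
          + (a : K) * (algebraMap (𝓞 K) K) (d * n) by ring]
    rw [key]
  -- the lifted function on the finite type
  set f : (𝓞 K)ˣ × (𝓞 K ⧸ I) → (Multiplicative K ⋊[fieldUnitsAction K] Kˣ) ⧸ (intFullSubgroup K) := fun p =>
    Quotient.liftOn' p.2 (fun m => f₀ (p.1, m))
      (fun m m' h => hwd p.1 m m' ((Submodule.quotientRel_def I).mp h)) with hf
  refine Set.Finite.subset (Set.finite_range f) ?_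
  rintro _ ⟨x, hx, rfl⟩
  obtain ⟨h₁, h1mem, h₂, h2mem, rfl⟩ := DoubleCoset.mem_doubleCoset.1 hx
  rw [QuotientGroup.mk_mul_of_mem _ h2mem]
  obtain ⟨⟨m, hm⟩, ⟨u, hu⟩⟩ := h1mem
  refine ⟨(u, Quotient.mk'' m), ?_⟩
  have hval : ((Units.map (algebraMap (𝓞 K) K).toMonoidHom u : Kˣ) : K)
      = algebraMap (𝓞 K) K (u : 𝓞 K) := rfl
  have hmem1 : (⟨1, h₁.right⟩ : (Multiplicative K ⋊[fieldUnitsAction K] Kˣ)) ∈ (intFullSubgroup K) := by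
    refine ⟨⟨0, ?_⟩, ⟨u, hu⟩⟩
    simp
  have heq : h₁ * γ = (⟨Multiplicative.ofAdd
      (algebraMap (𝓞 K) K m + algebraMap (𝓞 K) K (u : 𝓞 K) * b), a⟩ : (Multiplicative K ⋊[fieldUnitsAction K] Kˣ)) * ⟨1, h₁.right⟩ := by
    refine SemidirectProduct.ext ?_ ?_
    · show h₁.left * (fieldUnitsAction K h₁.right) γ.left
        = Multiplicative.ofAdd (algebraMap (𝓞 K) K m + algebraMap (𝓞 K) K (u : 𝓞 K) * b)
          * (fieldUnitsAction K a) 1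
      rw [map_one, mul_one]
      apply Multiplicative.toAdd.injective
      show Multiplicative.toAdd h₁.left + (h₁.right : K) * Multiplicative.toAdd γ.left
        = algebraMap (𝓞 K) K m + algebraMap (𝓞 K) K (u : 𝓞 K) * b
      rw [hm, ← hb, ← hu, hval]
    · show h₁.right * γ.right = a * h₁.right
      rw [← ha, mul_comm]
  show f₀ (u, m) = QuotientGroup.mk (h₁ * γ)
  rw [heq, QuotientGroup.mk_mul_of_mem _ hmem1]
end
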